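/- arXiv:1405.0912 — 8 statements merged into one kernel-verified Lean document; each statement's English description precedes it below -/
import Mathlib

section
/- Let Γ be a group acting by bijections on a set X. Assume that for every k ≥ 1 there exist elements f, g ∈ Γ and nonempty subsets A₁, …, A_k, B₁, …, B_k of X such that: for all nonzero integers n, fⁿ(A_i) ⊆ B_i for all i ∈ {1,…,k} and gⁿ(B_i) ⊆ A_{i+1} for all i ∈ {1,…,k−1}; and A₁ ∩ B_k = ∅. Then Γ satisfies no nontrivial law. -/
/-!
Substitute `xᵢ ↦ g^{i+1} f g^{i+1}` into a law `w`, which we may take cyclically reduced. The image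
is conjugate to an alternating word `f^{e₁} g^{c₁} ⋯ g^{c_m} f^{e}` with all exponents nonzero:
between consecutive letters the `g`-exponents add up to `±(i+1) ± (j+1)`, which vanishes only when
the letters cancel. Taking ping-pong data with `k = m + 1`, such a word sends `A₁` into `B_k`, so
it is not trivial, contradicting `A₁ ∩ B_k = ∅`.
-/

/-- A group satisfies a nontrivial law if for some `n ≥ 1` there is a nontrivial
element `w` of the free group on `n` generators killed by every homomorphism to the group. -/
def SatisfiesLaw (G : Type*) [Group G] : Prop :=
  ∃ n : ℕ, 1 ≤ n ∧ ∃ w : FreeGroup (Fin n), w ≠ 1 ∧ ∀ φ : FreeGroup (Fin n) →* G, φ w = 1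

open FreeGroup

section PingPong

variable {Γ X : Type*} [Group Γ] [MulAction Γ X]

def alternatingProd (f g : Γ) (P : List (ℤ × ℤ)) : Γ :=
  (P.map fun p => f ^ p.1 * g ^ p.2).prod

@[simp]
theorem alternatingProd_cons (f g : Γ) (e c : ℤ) (P : List (ℤ × ℤ)) :
    alternatingProd f g ((e, c) :: P) = f ^ e * g ^ c * alternatingProd f g P :=
  List.prod_cons

theorem zpow_mul_alternatingProd_cons_mul_zpow_neg (f g : Γ) (e c : ℤ) (P : List (ℤ × ℤ)) :
    f ^ e * alternatingProd f g ((e, c) :: P) * f ^ (-e)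
      = alternatingProd f g ((2 * e, c) :: P) * f ^ (-e) := by
  simp only [alternatingProd_cons, two_mul, zpow_add, mul_assoc]

variable {f g : Γ} {A B : ℕ → Set X} {k : ℕ}

theorem alternatingProd_mul_zpow_smul_mem
    (hf : ∀ n : ℤ, n ≠ 0 → ∀ i : ℕ, 1 ≤ i → i ≤ k → (fun x => (f ^ n) • x) '' A i ⊆ B i)
    (hg : ∀ n : ℤ, n ≠ 0 → ∀ i : ℕ, 1 ≤ i → i ≤ k - 1 →
      (fun x => (g ^ n) • x) '' B i ⊆ A (i + 1))
    {e : ℤ} (he : e ≠ 0) {a : X} (ha : a ∈ A 1) :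
    ∀ P : List (ℤ × ℤ), (∀ p ∈ P, p.1 ≠ 0 ∧ p.2 ≠ 0) → P.length < k →
      (alternatingProd f g P * f ^ e) • a ∈ B (P.length + 1)
  | [], _, hk => by
    simpa [alternatingProd] using hf e he 1 le_rfl hk ⟨a, ha, rfl⟩
  | (e', c) :: P, hP, hk => by
    obtain ⟨he', hc⟩ := hP _ List.mem_cons_self
    have hk' : P.length + 1 < k := by simpa using hk
    have hB := alternatingProd_mul_zpow_smul_mem hf hg he ha P
      (fun p hp => hP p (List.mem_cons_of_mem _ hp)) (by omega)
    have hA := hg c hc _ (by omega) (by omega) ⟨_, hB, rfl⟩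
    have hB' := hf e' he' _ (by omega) (by omega) ⟨_, hA, rfl⟩
    simpa [mul_smul, mul_assoc] using hB'

theorem alternatingProd_mul_zpow_ne_one {P : List (ℤ × ℤ)}
    (hf : ∀ n : ℤ, n ≠ 0 → ∀ i : ℕ, 1 ≤ i → i ≤ P.length + 1 →
      (fun x => (f ^ n) • x) '' A i ⊆ B i)
    (hg : ∀ n : ℤ, n ≠ 0 → ∀ i : ℕ, 1 ≤ i → i ≤ P.length + 1 - 1 →
      (fun x => (g ^ n) • x) '' B i ⊆ A (i + 1))
    (hA : (A 1).Nonempty) (hdisj : A 1 ∩ B (P.length + 1) = ∅)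
    (hP : ∀ p ∈ P, p.1 ≠ 0 ∧ p.2 ≠ 0) {e : ℤ} (he : e ≠ 0) :
    alternatingProd f g P * f ^ e ≠ 1 := by
  intro h
  obtain ⟨a, ha⟩ := hA
  have hB := alternatingProd_mul_zpow_smul_mem hf hg he ha P hP (Nat.lt_succ_self _)
  rw [h, one_smul] at hB
  exact (Set.eq_empty_iff_forall_notMem.mp hdisj) a ⟨ha, hB⟩

end PingPong

namespace FreeGroup

variable {α : Type*}

theorem IsCyclicallyReduced.isReduced_append_head {x : α × Bool} {L : List (α × Bool)}
    (h : IsCyclicallyReduced (x :: L)) : IsReduced (x :: L ++ [x]) :=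
  List.isChain_append.mpr ⟨h.isReduced, List.isChain_singleton x,
    fun a ha b hb => h.2 a ha b (by simpa using hb)⟩

theorem exists_conj_eq_mk_isCyclicallyReduced [DecidableEq α] {w : FreeGroup α} (hw : w ≠ 1) :
    ∃ u : FreeGroup α, ∃ x L, IsCyclicallyReduced (x :: L) ∧ w = u * mk (x :: L) * u⁻¹ := by
  have hconj := congrArg mk (reduceCyclically.conj_conjugator_reduceCyclically w.toWord)
  rw [mk_toWord, ← mul_mk, ← mul_mk, ← inv_mk] at hconj
  have hred := reduceCyclically.isCyclicallyReduced (isReduced_toWord (x := w))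
  rcases hR : reduceCyclically w.toWord with _ | ⟨x, L⟩
  · rw [hR, ← one_eq_mk, mul_one, mul_inv_cancel] at hconj
    exact absurd hconj.symm hw
  · rw [hR] at hconj hred
    exact ⟨_, x, L, hred, hconj.symm⟩

end FreeGroup

section Substitution

variable {α Γ : Type*} [Group Γ] (ι : α → ℕ)

def letterWeight (z : α × Bool) : ℤ := cond z.2 (ι z.1 + 1) (-(ι z.1 + 1))

def letterSign (z : α × Bool) : ℤ := cond z.2 1 (-1)

/-- The image of a word `x₁ ⋯ x_m` under `pingPongSubst` is
`g^{σ₁} f^{ε₁} g^{σ₁+σ₂} f^{ε₂} ⋯ g^{σ_{m-1}+σ_m} f^{ε_m} g^{σ_m}`, where `σ = letterWeight ι` and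
`ε = letterSign`; `linkPairs` lists the pairs `(εⱼ, σⱼ + σⱼ₊₁)`. -/
def linkPairs : List (α × Bool) → List (ℤ × ℤ)
  | x :: y :: L => (letterSign x, letterWeight ι x + letterWeight ι y) :: linkPairs (y :: L)
  | _ => []

def pingPongSubst (f g : Γ) (a : α) : Γ := g ^ ((ι a : ℤ) + 1) * f * g ^ ((ι a : ℤ) + 1)

theorem cond_pingPongSubst (f g : Γ) (z : α × Bool) :
    cond z.2 (pingPongSubst ι f g z.1) (pingPongSubst ι f g z.1)⁻¹
      = g ^ letterWeight ι z * f ^ letterSign z * g ^ letterWeight ι z := by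
  rcases z with ⟨a, _ | _⟩ <;> simp only [pingPongSubst, letterWeight, letterSign, cond_true,
    cond_false, zpow_neg, zpow_one, mul_inv_rev, mul_assoc]

theorem prod_map_cond_pingPongSubst_mul_zpow (f g : Γ) (y : α × Bool) :
    ∀ (x : α × Bool) (L : List (α × Bool)),
      ((x :: L).map fun z => cond z.2 (pingPongSubst ι f g z.1) (pingPongSubst ι f g z.1)⁻¹).prod
          * g ^ letterWeight ι y
        = g ^ letterWeight ι x * alternatingProd f g (linkPairs ι (x :: L ++ [y]))
  | x, [] => by
    simp [linkPairs, alternatingProd, cond_pingPongSubst, zpow_add, mul_assoc]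
  | x, x' :: L => by
    rw [List.map_cons, List.prod_cons, mul_assoc, prod_map_cond_pingPongSubst_mul_zpow f g y x' L,
      cond_pingPongSubst]
    simp only [List.cons_append, linkPairs, alternatingProd_cons, zpow_add, mul_assoc]

variable {ι}

theorem letterWeight_add_ne_zero (hι : Function.Injective ι) {x y : α × Bool}
    (hxy : x.1 = y.1 → x.2 = y.2) : letterWeight ι x + letterWeight ι y ≠ 0 := by
  rcases x with ⟨a, _ | _⟩ <;> rcases y with ⟨b, _ | _⟩ <;>
    simp only [letterWeight, cond_true, cond_false] at hxy ⊢
  · omega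
  · intro h
    exact absurd (hxy (hι (by omega))) (by decide)
  · intro h
    exact absurd (hxy (hι (by omega))) (by decide)
  · omega

theorem linkPairs_ne_zero (hι : Function.Injective ι) :
    ∀ {L : List (α × Bool)}, IsReduced L → ∀ p ∈ linkPairs ι L, p.1 ≠ 0 ∧ p.2 ≠ 0
  | [], _, _, hp | [_], _, _, hp => absurd hp List.not_mem_nil
  | x :: y :: L, hL, p, hp => by
    rw [isReduced_cons_cons] at hL
    rcases List.mem_cons.mp hp with rfl | hp
    · exact ⟨by rcases x with ⟨_, _ | _⟩ <;> simp [letterSign],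
        letterWeight_add_ne_zero hι hL.1⟩
    · exact linkPairs_ne_zero hι hL.2 p hp

theorem exists_alternatingProd_mul_zpow_eq_one_of_lift_eq_one [DecidableEq α]
    (hι : Function.Injective ι) {w : FreeGroup α} (hw : w ≠ 1) :
    ∃ P : List (ℤ × ℤ), ∃ e : ℤ, (∀ p ∈ P, p.1 ≠ 0 ∧ p.2 ≠ 0) ∧ e ≠ 0 ∧
      ∀ f g : Γ, lift (pingPongSubst ι f g) w = 1 → alternatingProd f g P * f ^ e = 1 := by
  obtain ⟨u, x, L, hcyc, rfl⟩ := exists_conj_eq_mk_isCyclicallyReduced hw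
  have hlink := linkPairs_ne_zero hι hcyc.isReduced_append_head
  obtain ⟨c, Q, hQ⟩ : ∃ c Q, linkPairs ι (x :: L ++ [x]) = (letterSign x, c) :: Q := by
    cases L <;> exact ⟨_, _, rfl⟩
  rw [hQ] at hlink
  obtain ⟨⟨hε, hc⟩, hQ'⟩ := List.forall_mem_cons.mp hlink
  -- conjugating by `f ^ letterSign x` makes the word start and end with a nonzero power of `f`
  refine ⟨(2 * letterSign x, c) :: Q, -letterSign x, ?_, neg_ne_zero.mpr hε, fun f g h => ?_⟩
  · exact List.forall_mem_cons.mpr ⟨⟨mul_ne_zero two_ne_zero hε, hc⟩, hQ'⟩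
  have hword : lift (pingPongSubst ι f g) (mk (x :: L)) = 1 := by
    simpa using h
  have halt : alternatingProd f g ((letterSign x, c) :: Q) = 1 := by
    have := prod_map_cond_pingPongSubst_mul_zpow ι f g x x L
    rwa [← lift_mk, hword, one_mul, hQ, left_eq_mul] at this
  rw [← zpow_mul_alternatingProd_cons_mul_zpow_neg, halt, mul_one, zpow_neg, mul_inv_cancel]

end Substitution

/-- **Finite ping-pong lemma.** Let `Γ` act by bijections on a set `X`. If for every
`k ≥ 1` there are `f, g ∈ Γ` and nonempty subsets `A₁,…,A_k, B₁,…,B_k` of `X` such that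
`fⁿ(Aᵢ) ⊆ Bᵢ` (`1 ≤ i ≤ k`) and `gⁿ(Bᵢ) ⊆ A_{i+1}` (`1 ≤ i ≤ k-1`) for every nonzero
integer `n`, and `A₁ ∩ B_k = ∅`, then `Γ` satisfies no nontrivial law. -/
theorem no_law_of_finite_ping_pong
    {Γ X : Type*} [Group Γ] [MulAction Γ X]
    (H : ∀ k : ℕ, 1 ≤ k → ∃ f g : Γ, ∃ A B : ℕ → Set X,
      (∀ i : ℕ, 1 ≤ i → i ≤ k → (A i).Nonempty ∧ (B i).Nonempty) ∧
      (∀ n : ℤ, n ≠ 0 → ∀ i : ℕ, 1 ≤ i → i ≤ k →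
        (fun x => (f ^ n) • x) '' A i ⊆ B i) ∧
      (∀ n : ℤ, n ≠ 0 → ∀ i : ℕ, 1 ≤ i → i ≤ k - 1 →
        (fun x => (g ^ n) • x) '' B i ⊆ A (i + 1)) ∧
      A 1 ∩ B k = ∅) :
    ¬ SatisfiesLaw Γ := by
  rintro ⟨N, -, w, hw, hlaw⟩
  obtain ⟨P, e, hP, he, hword⟩ :=
    exists_alternatingProd_mul_zpow_eq_one_of_lift_eq_one (Γ := Γ) Fin.val_injective hw
  obtain ⟨f, g, A, B, hne, hf, hg, hdisj⟩ := H (P.length + 1) (Nat.le_add_left 1 _)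
  exact alternatingProd_mul_zpow_ne_one hf hg (hne 1 le_rfl (by omega)).1 hdisj hP he
    (hword f g (hlaw _))
end

section
/- Let Γ be a group equipped with a left-order ≼. Suppose that for every k ≥ 1 there exist f, g ∈ Γ and elements h_i, h_i', h̄_i, h̄_i' (1 ≤ i ≤ 2k+1) ordered as h₁ ≺ h₁' ≺ h̄₁ ≺ h̄₁' ≺ h₂ ≺ h₂' ≺ h̄₂ ≺ h̄₂' ≺ … ≺ h_{2k+1} ≺ h_{2k+1}' ≺ h̄_{2k+1} ≺ h̄_{2k+1}', such that for every nonzero integer n: (a) for each i ∈ {2,…,2k+1}, either h̄_{i−1} ≺ fⁿh_i ≺ fⁿh_i' ≺ h̄_{i−1}' or h̄_i ≺ fⁿh_i ≺ fⁿh_i' ≺ h̄_i'; and (b) for each i ∈ {1,…,2k}, either h_i ≺ gⁿh̄_i ≺ gⁿh̄_i' ≺ h_i' or h_{i+1} ≺ gⁿh̄_i ≺ gⁿh̄_i' ≺ h_{i+1}'. Then Γ satisfies no nontrivial law. -/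
/-!
Interleaving the intervals `[hᵢ, hᵢ']` and `[h̄ᵢ, h̄ᵢ']` gives one chain of disjoint intervals in
which every nonzero power of `f` or `g` moves an interval into the interior of a neighbour. An
alternating word in `f` and `g` with nonzero exponents therefore moves the left endpoint of a
middle interval into the interior of an interval, so it is not `1` (local ping-pong). Sending
`xᵢ ↦ g ^ (i + 1) * f * g ^ (i + 1)` turns a nontrivial reduced word into such an alternating
word, since adjacent powers `g ^ (±(i + 1)) * g ^ (±(j + 1))` cancel only for a cancelling pair of
letters; choosing `k` beyond its length shows that no nontrivial word is a law.
-/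

open Set

section Interleave

variable {α : Type*}

def interleave (u v : ℕ → α) (j : ℕ) : α :=
  if Even j then u (j / 2 + 1) else v (j / 2 + 1)

@[simp]
theorem interleave_two_mul (u v : ℕ → α) (i : ℕ) : interleave u v (2 * i) = u (i + 1) := by
  simp [interleave]

@[simp]
theorem interleave_two_mul_add_one (u v : ℕ → α) (i : ℕ) :
    interleave u v (2 * i + 1) = v (i + 1) := by
  rw [interleave, if_neg (by simp), show (2 * i + 1) / 2 = i by omega]

end Interleave

section Group

variable {Γ : Type*} [Group Γ]

def altProd (x y : Γ) : List ℤ → Γ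
  | [] => 1
  | n :: ns => x ^ n * altProd y x ns

section PingPong

variable [LinearOrder Γ]

structure PingPongChain (a b s : ℕ → Γ) (N : ℕ) : Prop where
  le : ∀ j ≤ N + 1, a j ≤ b j
  lt_succ : ∀ j ≤ N, b j < a (j + 1)
  periodic : ∀ j, s (j + 2) = s j
  mapsTo : ∀ j, 1 ≤ j → j ≤ N → ∀ n : ℤ, n ≠ 0 →
    (a (j - 1) < s j ^ n * a j ∧ s j ^ n * b j < b (j - 1)) ∨
    (a (j + 1) < s j ^ n * a j ∧ s j ^ n * b j < b (j + 1))

namespace PingPongChain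

variable {a b s : ℕ → Γ} {N : ℕ}

theorem b_lt_a (hP : PingPongChain a b s N) {i j : ℕ} (hij : i < j) (hj : j ≤ N + 1) :
    b i < a j := by
  induction j, hij using Nat.le_induction with
  | base => exact hP.lt_succ i (by omega)
  | succ j hij ih =>
    exact ((ih (by omega)).trans_le (hP.le j (by omega))).trans (hP.lt_succ j (by omega))

theorem a_notMem_Ioo (hP : PingPongChain a b s N) {i j : ℕ} (hi : i ≤ N + 1) (hj : j ≤ N + 1) :
    a i ∉ Ioo (a j) (b j) := by
  rintro ⟨hji, hij⟩
  rcases lt_trichotomy j i with hlt | rfl | hgt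
  · exact (hP.b_lt_a hlt hi).not_gt hij
  · exact hji.false
  · exact ((hP.le i hi).trans_lt (hP.b_lt_a hgt hj)).not_gt hji

variable [MulLeftStrictMono Γ]

theorem exists_zpow_mul_mem_Ioo (hP : PingPongChain a b s N) {j : ℕ} (hj : 1 ≤ j)
    (hjN : j ≤ N) {n : ℤ} (hn : n ≠ 0) {p : Γ} (hp : p ∈ Icc (a j) (b j)) :
    ∃ j', (j' = j - 1 ∨ j' = j + 1) ∧ s j ^ n * p ∈ Ioo (a j') (b j') := by
  have := mulLeftMono_of_mulLeftStrictMono Γ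
  have hpa := mul_le_mul_right hp.1 (s j ^ n)
  have hpb := mul_le_mul_right hp.2 (s j ^ n)
  rcases hP.mapsTo j hj hjN n hn with ⟨ha, hb⟩ | ⟨ha, hb⟩
  · exact ⟨j - 1, Or.inl rfl, ha.trans_le hpa, hpb.trans_lt hb⟩
  · exact ⟨j + 1, Or.inr rfl, ha.trans_le hpa, hpb.trans_lt hb⟩

/-- Passing to the inverse makes the leftmost syllable act first, so the induction runs
along the list. -/
theorem exists_inv_altProd_mul_mem_Ioo (hP : PingPongChain a b s N) {n : ℤ} {ns : List ℤ}
    (hn : n ≠ 0) (hns : ∀ m ∈ ns, m ≠ 0) {j : ℕ} (hj : ns.length + 1 ≤ j)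
    (hjN : j + ns.length ≤ N) {p : Γ} (hp : p ∈ Icc (a j) (b j)) :
    ∃ j' ≤ N + 1, (altProd (s j) (s (j + 1)) (n :: ns))⁻¹ * p ∈ Ioo (a j') (b j') := by
  induction ns generalizing n j p with
  | nil =>
    obtain ⟨j', hj', hmem⟩ :=
      hP.exists_zpow_mul_mem_Ioo (by omega) (by simpa using hjN) (neg_ne_zero.2 hn) hp
    exact ⟨j', by omega, by simpa [altProd] using hmem⟩
  | cons m ns ih =>
    simp only [List.length_cons] at hj hjN
    obtain ⟨j', hj', hmem⟩ :=
      hP.exists_zpow_mul_mem_Ioo (by omega) (by omega) (neg_ne_zero.2 hn) hp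
    have hs : s (j + 1) = s j' ∧ s j = s (j' + 1) := by
      rcases hj' with rfl | rfl
      · refine ⟨?_, congrArg s (by omega)⟩
        rw [← hP.periodic (j - 1)]
        exact congrArg s (by omega)
      · exact ⟨rfl, (hP.periodic j).symm⟩
    obtain ⟨j'', hj'', hmem'⟩ := ih (hns m (by simp)) (fun x hx ↦ hns x (by simp [hx]))
      (j := j') (by omega) (by omega) (Ioo_subset_Icc_self hmem)
    rw [← hs.1, ← hs.2] at hmem'
    refine ⟨j'', hj'', ?_⟩
    rwa [altProd, mul_inv_rev, mul_assoc, ← zpow_neg]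

theorem altProd_ne_one (hP : PingPongChain a b s N) {ns : List ℤ} (hns : ∀ n ∈ ns, n ≠ 0)
    (hne : ns ≠ []) {j : ℕ} (hj : ns.length ≤ j) (hjN : j + ns.length ≤ N + 1) :
    altProd (s j) (s (j + 1)) ns ≠ 1 := by
  obtain ⟨n, ns, rfl⟩ := List.exists_cons_of_ne_nil hne
  simp only [List.length_cons] at hj hjN
  intro h1
  obtain ⟨j', hj', hmem⟩ := hP.exists_inv_altProd_mul_mem_Ioo (hns n (by simp))
    (fun x hx ↦ hns x (List.mem_cons_of_mem n hx)) (by omega) (by omega)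
    ⟨le_rfl, hP.le j (by omega)⟩
  rw [h1, inv_one, one_mul] at hmem
  exact hP.a_notMem_Ioo (by omega) hj' hmem

end PingPongChain

theorem pingPongChain_interleave {f g : Γ} {h h' hb hb' : ℕ → Γ} {k : ℕ}
    (hc : ∀ i : ℕ, 1 ≤ i → i ≤ 2 * k + 1 → h i < h' i ∧ h' i < hb i ∧ hb i < hb' i)
    (hsep : ∀ i : ℕ, 1 ≤ i → i ≤ 2 * k → hb' i < h (i + 1))
    (hf : ∀ n : ℤ, n ≠ 0 → ∀ i : ℕ, 2 ≤ i → i ≤ 2 * k + 1 →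
      (hb (i - 1) < f ^ n * h i ∧ f ^ n * h' i < hb' (i - 1)) ∨
      (hb i < f ^ n * h i ∧ f ^ n * h' i < hb' i))
    (hg : ∀ n : ℤ, n ≠ 0 → ∀ i : ℕ, 1 ≤ i → i ≤ 2 * k →
      (h i < g ^ n * hb i ∧ g ^ n * hb' i < h' i) ∨
      (h (i + 1) < g ^ n * hb i ∧ g ^ n * hb' i < h' (i + 1))) :
    PingPongChain (interleave h hb) (interleave h' hb') (interleave (fun _ ↦ f) (fun _ ↦ g))
      (4 * k) where
  le j hj := by
    obtain ⟨i, rfl | rfl⟩ := Nat.even_or_odd' j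
    · simpa using (hc (i + 1) (by omega) (by omega)).1.le
    · simpa using (hc (i + 1) (by omega) (by omega)).2.2.le
  lt_succ j hj := by
    obtain ⟨i, rfl | rfl⟩ := Nat.even_or_odd' j
    · simpa using (hc (i + 1) (by omega) (by omega)).2.1
    · simpa [show 2 * i + 1 + 1 = 2 * (i + 1) by ring] using hsep (i + 1) (by omega) (by omega)
  periodic j := by simp [interleave, Nat.even_add]
  mapsTo j hj hjN n hn := by
    obtain ⟨i, rfl | rfl⟩ := Nat.even_or_odd' j
    · obtain ⟨i, rfl⟩ : ∃ i', i = i' + 1 := ⟨i - 1, by omega⟩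
      simpa [show 2 * (i + 1) - 1 = 2 * i + 1 by omega] using hf n hn (i + 2) (by omega) (by omega)
    · simpa [show 2 * i + 1 + 1 = 2 * (i + 1) by ring] using hg n hn (i + 1) (by omega) (by omega)

end PingPong

section Law

variable {α : Type*} (m : α → ℤ)

/-- The exponent of `g` on both sides of `f ^ (±1)` in the image of the letter `(i, ±)` under
`i ↦ g ^ m i * f * g ^ m i`. -/
def gExp (l : α × Bool) : ℤ := if l.2 then m l.1 else -m l.1

def syllables (c : ℤ) : List (α × Bool) → List ℤ
  | [] => [c]
  | l :: t => (c + gExp m l) :: (if l.2 then 1 else -1) :: syllables (gExp m l) t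

theorem length_syllables (c : ℤ) (L : List (α × Bool)) :
    (syllables m c L).length = 2 * L.length + 1 := by
  induction L generalizing c with
  | nil => rfl
  | cons l t ih => simp [syllables, ih]; ring

theorem altProd_syllables (f g : Γ) (c : ℤ) (L : List (α × Bool)) :
    altProd g f (syllables m c L) =
      g ^ c * FreeGroup.lift (fun i ↦ g ^ m i * f * g ^ m i) (FreeGroup.mk L) := by
  induction L generalizing c with
  | nil => simp [syllables, altProd]
  | cons l t ih =>
    rw [syllables, altProd, altProd, ih, FreeGroup.lift_mk, FreeGroup.lift_mk, List.map_cons,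
      List.prod_cons]
    obtain ⟨i, _ | _⟩ := l <;> simp only [gExp, cond_true, cond_false, if_true, if_false,
      Bool.false_eq_true] <;> group

variable {m}

theorem gExp_ne_zero (hpos : ∀ i, 0 < m i) (l : α × Bool) : gExp m l ≠ 0 := by
  have := hpos l.1
  unfold gExp
  split_ifs <;> omega

theorem gExp_add_gExp_ne_zero (hm : Function.Injective m) (hpos : ∀ i, 0 < m i)
    {l l' : α × Bool} (h : l.1 = l'.1 → l.2 = l'.2) : gExp m l + gExp m l' ≠ 0 := by
  obtain ⟨i, b⟩ := l
  obtain ⟨j, b'⟩ := l'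
  have := hpos i
  have := hpos j
  by_cases hij : i = j
  · subst hij
    obtain rfl := h rfl
    cases b <;> simp [gExp] <;> omega
  · have := hm.ne hij
    cases b <;> cases b' <;> simp [gExp] <;> omega

theorem syllables_ne_zero (hm : Function.Injective m) (hpos : ∀ i, 0 < m i) {l : α × Bool}
    {t : List (α × Bool)} (hred : FreeGroup.IsReduced (l :: t)) {c : ℤ} (hc : c + gExp m l ≠ 0) :
    ∀ x ∈ syllables m c (l :: t), x ≠ 0 := by
  induction t generalizing l c with
  | nil => simp [syllables, hc, gExp_ne_zero hpos]; split_ifs <;> simp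
  | cons l' t ih =>
    rw [FreeGroup.isReduced_cons_cons] at hred
    intro x hx
    simp only [syllables, List.mem_cons] at hx
    rcases hx with rfl | rfl | hx
    · exact hc
    · split_ifs <;> simp
    · exact ih hred.2 (gExp_add_gExp_ne_zero hm hpos hred.1) x (by simpa [syllables] using hx)

end Law

end Group

/-- Let `Γ` carry a left-invariant linear order. Suppose that for every `k ≥ 1` there
are `f, g ∈ Γ` and elements `hᵢ ≺ hᵢ' ≺ h̄ᵢ ≺ h̄ᵢ'` (`1 ≤ i ≤ 2k+1`), ordered as a chain
`h₁ ≺ h₁' ≺ h̄₁ ≺ h̄₁' ≺ h₂ ≺ … ≺ h̄_{2k+1}'`, such that for every nonzero integer `n`: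
(a) for `2 ≤ i ≤ 2k+1`, either `h̄_{i-1} ≺ fⁿhᵢ ≺ fⁿhᵢ' ≺ h̄_{i-1}'` or
`h̄ᵢ ≺ fⁿhᵢ ≺ fⁿhᵢ' ≺ h̄ᵢ'`; (b) for `1 ≤ i ≤ 2k`, either `hᵢ ≺ gⁿh̄ᵢ ≺ gⁿh̄ᵢ' ≺ hᵢ'`
or `h_{i+1} ≺ gⁿh̄ᵢ ≺ gⁿh̄ᵢ' ≺ h_{i+1}'`. Then `Γ` satisfies no nontrivial law. -/
theorem no_law_of_order_ping_pong
    {Γ : Type*} [Group Γ] [LinearOrder Γ]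
    (hleft : ∀ a b c : Γ, a < b → c * a < c * b)
    (H : ∀ k : ℕ, 1 ≤ k → ∃ f g : Γ, ∃ h h' hb hb' : ℕ → Γ,
      (∀ i : ℕ, 1 ≤ i → i ≤ 2 * k + 1 →
        h i < h' i ∧ h' i < hb i ∧ hb i < hb' i) ∧
      (∀ i : ℕ, 1 ≤ i → i ≤ 2 * k → hb' i < h (i + 1)) ∧
      (∀ n : ℤ, n ≠ 0 → ∀ i : ℕ, 2 ≤ i → i ≤ 2 * k + 1 →
        (hb (i - 1) < f ^ n * h i ∧ f ^ n * h i < f ^ n * h' i ∧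
          f ^ n * h' i < hb' (i - 1)) ∨
        (hb i < f ^ n * h i ∧ f ^ n * h i < f ^ n * h' i ∧ f ^ n * h' i < hb' i)) ∧
      (∀ n : ℤ, n ≠ 0 → ∀ i : ℕ, 1 ≤ i → i ≤ 2 * k →
        (h i < g ^ n * hb i ∧ g ^ n * hb i < g ^ n * hb' i ∧ g ^ n * hb' i < h' i) ∨
        (h (i + 1) < g ^ n * hb i ∧ g ^ n * hb i < g ^ n * hb' i ∧
          g ^ n * hb' i < h' (i + 1)))) :
    ¬ SatisfiesLaw Γ := by
  have : MulLeftStrictMono Γ := ⟨fun c _ _ hab ↦ hleft _ _ c hab⟩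
  rintro ⟨r, -, w, hw, hlaw⟩
  obtain ⟨l, t, hwt⟩ := List.exists_cons_of_ne_nil (mt FreeGroup.toWord_eq_nil_iff.1 hw)
  obtain ⟨f, g, h, h', hb, hb', hc, hsep, hf, hg⟩ := H (t.length + 2) (by omega)
  have drop_middle {A B C D E F : Prop} : (A ∧ B ∧ C) ∨ (D ∧ E ∧ F) → (A ∧ C) ∨ (D ∧ F) :=
    Or.imp (And.imp_right And.right) (And.imp_right And.right)
  have hP := pingPongChain_interleave hc hsep
    (fun n hn i hi hi' ↦ drop_middle (hf n hn i hi hi'))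
    (fun n hn i hi hi' ↦ drop_middle (hg n hn i hi hi'))
  let m : Fin r → ℤ := fun i ↦ i + 1
  have hm : Function.Injective m := fun i j hij ↦ Fin.ext (by simpa [m] using hij)
  have hpos : ∀ i, 0 < m i := fun i ↦ by positivity
  refine hP.altProd_ne_one (j := 2 * (t.length + 2) + 1) (ns := syllables m 0 (l :: t))
    (syllables_ne_zero hm hpos (hwt ▸ FreeGroup.isReduced_toWord)
      (by simpa using gExp_ne_zero hpos l))
    (by simp [syllables]) (by simp [length_syllables]) (by simp [length_syllables]; omega) ?_
  have hs : interleave (fun _ ↦ f) (fun _ ↦ g) (2 * (t.length + 2) + 1 + 1) = f := by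
    rw [show 2 * (t.length + 2) + 1 + 1 = 2 * (t.length + 3) by ring, interleave_two_mul]
  rw [interleave_two_mul_add_one, hs, altProd_syllables, ← hwt, FreeGroup.mk_toWord, zpow_zero,
    one_mul]
  exact hlaw _
end

section
/- Let Γ be a finitely generated group of orientation-preserving homeomorphisms of the real line whose action is minimal (every orbit is dense in ℝ) and not free (some nontrivial element of Γ has a fixed point). Then either there exists an orientation-preserving homeomorphism φ of ℝ without fixed points that commutes with every element of Γ, or for all reals a < b and a' < b' there exists g ∈ Γ with g(a) < a' and g(b) > b'. -/
/-!
If some interval `[a, b]` cannot be expanded over `[a', b']`, then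
`f x = sup {g b | g ∈ Γ, g a ≤ x}` is finite: by minimality some `h ∈ Γ` pushes `x` below
`a'`, and then `h g b ≤ b'`. This `f` is monotone and commutes with `Γ`. By minimality every
nonempty `Γ`-invariant set is dense, and `f` has three such sets attached to it:
`{x | f x ≤ x}` misses `(a, b)`, where `f ≥ b`, so it is empty; `range f` is dense, so `f` is
onto; the set of points of strict increase is nonempty since `f` is not constant, and being
dense it makes `f` strictly monotone. Hence `f` is a fixed-point-free homeomorphism commuting
with `Γ`.
-/

open Set Filter

theorem Monotone.surjective_of_denseRange {α β : Type*} [ConditionallyCompleteLinearOrder α]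
    [TopologicalSpace α] [OrderTopology α] [DenselyOrdered α] [LinearOrder β]
    [TopologicalSpace β] [OrderTopology β] [DenselyOrdered β] [NoMaxOrder β] [NoMinOrder β]
    {f : α → β} (hf : Monotone f) (hd : DenseRange f) : Function.Surjective f := by
  refine (hf.continuous_of_denseRange hd).surjective
    (tendsto_atTop_atTop_of_monotone hf fun b ↦ ?_)
    (tendsto_atBot_atBot_of_monotone hf fun b ↦ ?_)
  · obtain ⟨_, ⟨a, rfl⟩, h⟩ := hd.exists_ge b
    exact ⟨a, h⟩
  · obtain ⟨_, ⟨a, rfl⟩, h⟩ := hd.exists_le b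
    exact ⟨a, h⟩

theorem Monotone.exists_forall_lt_of_ne {α β : Type*} [LinearOrder α] [TopologicalSpace α]
    [OrderTopology α] [PreconnectedSpace α] [PartialOrder β] {f : α → β} (hf : Monotone f)
    {x y : α} (hxy : f x ≠ f y) : ∃ z, ∀ u v, u < z → z < v → f u < f v := by
  by_contra! h
  refine hxy (((IsLocallyConstant.iff_eventually_eq f).2 fun z ↦ ?_).apply_eq_of_preconnectedSpace
    x y)
  obtain ⟨u, v, huz, hzv, hvu⟩ := h z
  have huv : f u = f v := (hf (huz.trans hzv).le).eq_of_not_lt hvu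
  have hconst : ∀ w ∈ Icc u v, f w = f u := fun w hw ↦
    le_antisymm (huv ▸ hf hw.2) (hf hw.1)
  filter_upwards [Ioo_mem_nhds huz hzv] with w hw
  rw [hconst w (Ioo_subset_Icc_self hw), hconst z ⟨huz.le, hzv.le⟩]

def IsMinimal (Γ : Subgroup (ℝ ≃o ℝ)) : Prop :=
  ∀ x : ℝ, Dense {y : ℝ | ∃ g ∈ Γ, g x = y}

def IsInvariantSet (Γ : Subgroup (ℝ ≃o ℝ)) (A : Set ℝ) : Prop :=
  ∀ g ∈ Γ, ∀ x ∈ A, g x ∈ A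

def IsEquivariant (Γ : Subgroup (ℝ ≃o ℝ)) (f : ℝ → ℝ) : Prop :=
  ∀ g ∈ Γ, ∀ x, f (g x) = g (f x)

variable {Γ : Subgroup (ℝ ≃o ℝ)} {f : ℝ → ℝ}

theorem IsMinimal.dense_of_isInvariantSet (hmin : IsMinimal Γ) {A : Set ℝ}
    (hA : IsInvariantSet Γ A) (hne : A.Nonempty) : Dense A := by
  obtain ⟨x, hx⟩ := hne
  refine (hmin x).mono ?_
  rintro _ ⟨g, hg, rfl⟩
  exact hA g hg x hx

namespace IsEquivariant

theorem isInvariantSet_range (hf : IsEquivariant Γ f) : IsInvariantSet Γ (range f) := by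
  rintro g hg _ ⟨x, rfl⟩
  exact ⟨g x, hf g hg x⟩

theorem isInvariantSet_setOf_le (hf : IsEquivariant Γ f) :
    IsInvariantSet Γ {x | f x ≤ x} := by
  intro g hg x hx
  simpa only [mem_ofPred_eq, hf g hg x] using g.monotone hx

theorem isInvariantSet_setOf_forall_lt (hf : IsEquivariant Γ f) :
    IsInvariantSet Γ {z | ∀ u v, u < z → z < v → f u < f v} := by
  intro g hg z hz u v hu hv
  have := hz (g⁻¹ u) (g⁻¹ v) (by simpa using (g⁻¹).strictMono hu)
    (by simpa using (g⁻¹).strictMono hv)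
  rw [hf _ (inv_mem hg), hf _ (inv_mem hg)] at this
  simpa using g.strictMono this

theorem lt_apply_of_isOpen (hmin : IsMinimal Γ) (hf : IsEquivariant Γ f) {U : Set ℝ}
    (hU : IsOpen U) (hUne : U.Nonempty) (hlt : ∀ y ∈ U, y < f y) (x : ℝ) : x < f x := by
  by_contra! hx
  have hdense := hmin.dense_of_isInvariantSet hf.isInvariantSet_setOf_le ⟨x, hx⟩
  obtain ⟨y, hy, hyU⟩ := hdense.exists_mem_open hU hUne
  exact (hlt y hyU).not_ge hy

theorem strictMono_of_ne (hmin : IsMinimal Γ) (hf : IsEquivariant Γ f) (hmono : Monotone f)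
    {x y : ℝ} (hxy : f x ≠ f y) : StrictMono f := by
  have hdense := hmin.dense_of_isInvariantSet hf.isInvariantSet_setOf_forall_lt
    (hmono.exists_forall_lt_of_ne hxy)
  intro u v huv
  obtain ⟨z, hz, huz, hzv⟩ := hdense.exists_between huv
  exact hz u v huz hzv

theorem surjective (hmin : IsMinimal Γ) (hf : IsEquivariant Γ f) (hmono : Monotone f) :
    Function.Surjective f :=
  hmono.surjective_of_denseRange
    (hmin.dense_of_isInvariantSet hf.isInvariantSet_range (range_nonempty f))

end IsEquivariant

def endpointImages (Γ : Subgroup (ℝ ≃o ℝ)) (a b x : ℝ) : Set ℝ :=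
  {y | ∃ g ∈ Γ, g a ≤ x ∧ g b = y}

noncomputable def endpointSup (Γ : Subgroup (ℝ ≃o ℝ)) (a b x : ℝ) : ℝ :=
  sSup (endpointImages Γ a b x)

variable {a b a' b' : ℝ}

theorem endpointImages_apply {h : ℝ ≃o ℝ} (hh : h ∈ Γ) (x : ℝ) :
    endpointImages Γ a b (h x) = h '' endpointImages Γ a b x := by
  ext y
  constructor
  · rintro ⟨g, hg, hga, rfl⟩
    refine ⟨(h⁻¹ * g) b, ⟨h⁻¹ * g, mul_mem (inv_mem hh) hg, ?_, rfl⟩,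
      by simp [RelIso.mul_apply]⟩
    simpa [RelIso.mul_apply] using (h⁻¹).monotone hga
  · rintro ⟨_, ⟨g, hg, hga, rfl⟩, rfl⟩
    exact ⟨h * g, mul_mem hh hg, h.monotone hga, rfl⟩

theorem IsMinimal.endpointImages_nonempty (hmin : IsMinimal Γ) (a b x : ℝ) :
    (endpointImages Γ a b x).Nonempty := by
  obtain ⟨_, ⟨g, hg, rfl⟩, hgx⟩ := (hmin a).exists_le x
  exact ⟨g b, g, hg, hgx, rfl⟩

theorem IsMinimal.bddAbove_endpointImages (hmin : IsMinimal Γ)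
    (hno : ∀ g ∈ Γ, g a < a' → g b ≤ b') (x : ℝ) : BddAbove (endpointImages Γ a b x) := by
  obtain ⟨_, ⟨h, hh, rfl⟩, hhx⟩ := (hmin x).exists_lt a'
  refine ⟨h⁻¹ b', ?_⟩
  rintro _ ⟨g, hg, hga, rfl⟩
  have := hno (h * g) (mul_mem hh hg) ((h.monotone hga).trans_lt hhx)
  simpa [RelIso.mul_apply] using (h⁻¹).monotone this

theorem IsMinimal.monotone_endpointSup (hmin : IsMinimal Γ)
    (hno : ∀ g ∈ Γ, g a < a' → g b ≤ b') : Monotone (endpointSup Γ a b) := by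
  intro x y hxy
  refine csSup_le_csSup (hmin.bddAbove_endpointImages hno y)
    (hmin.endpointImages_nonempty a b x) ?_
  rintro _ ⟨g, hg, hga, rfl⟩
  exact ⟨g, hg, hga.trans hxy, rfl⟩

theorem IsMinimal.isEquivariant_endpointSup (hmin : IsMinimal Γ)
    (hno : ∀ g ∈ Γ, g a < a' → g b ≤ b') : IsEquivariant Γ (endpointSup Γ a b) := by
  intro h hh x
  rw [endpointSup, endpointImages_apply hh]
  have hne := hmin.endpointImages_nonempty a b x
  have hlub := isLUB_csSup hne (hmin.bddAbove_endpointImages hno x)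
  exact ((OrderIso.isLUB_image' h).2 hlub).csSup_eq (hne.image h)

theorem le_endpointSup {x : ℝ} (hbdd : BddAbove (endpointImages Γ a b x)) (hx : a ≤ x) :
    b ≤ endpointSup Γ a b x :=
  le_csSup hbdd ⟨1, one_mem Γ, hx, rfl⟩

theorem IsMinimal.exists_commuting_of_not_expanding (hmin : IsMinimal Γ) (hab : a < b)
    (hno : ∀ g ∈ Γ, g a < a' → g b ≤ b') :
    ∃ φ : ℝ ≃o ℝ, (∀ x, φ x ≠ x) ∧ IsEquivariant Γ φ := by
  set f := endpointSup Γ a b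
  have hmono : Monotone f := hmin.monotone_endpointSup hno
  have hf : IsEquivariant Γ f := hmin.isEquivariant_endpointSup hno
  have hlt : ∀ x, x < f x := hf.lt_apply_of_isOpen hmin isOpen_Ioo (nonempty_Ioo.2 hab)
    fun y hy ↦ hy.2.trans_le (le_endpointSup (hmin.bddAbove_endpointImages hno y) hy.1.le)
  have hsm : StrictMono f := hf.strictMono_of_ne hmin hmono (hlt (f 0)).ne
  exact ⟨hsm.orderIsoOfSurjective f (hf.surjective hmin hmono), fun x ↦ (hlt x).ne', hf⟩

theorem commuting_homeo_or_expansion_general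
    (Γ : Subgroup (ℝ ≃o ℝ))
    (hmin : ∀ x : ℝ, Dense {y : ℝ | ∃ g ∈ Γ, g x = y}) :
    (∃ φ : ℝ ≃o ℝ, (∀ x : ℝ, φ x ≠ x) ∧ ∀ g ∈ Γ, ∀ x : ℝ, φ (g x) = g (φ x)) ∨
    (∀ a b a' b' : ℝ, a < b → a' < b' → ∃ g ∈ Γ, g a < a' ∧ b' < g b) := by
  refine or_iff_not_imp_right.2 fun hexp ↦ ?_
  push Not at hexp
  obtain ⟨a, b, a', b', hab, -, hno⟩ := hexp
  exact IsMinimal.exists_commuting_of_not_expanding hmin hab hno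

/-- Let `Γ` be a finitely generated group of orientation-preserving homeomorphisms of
the real line (formalized as order-isomorphisms of `ℝ`) whose action is minimal (every
orbit is dense) and not free (some nontrivial element has a fixed point). Then either
there is a fixed-point-free orientation-preserving homeomorphism of `ℝ` commuting with
every element of `Γ`, or every interval can be expanded over any other: for all
`a < b` and `a' < b'` there is `g ∈ Γ` with `g a < a'` and `g b > b'`. -/
theorem commuting_homeo_or_expansion
    (Γ : Subgroup (ℝ ≃o ℝ))
    (hfg : Group.FG ↥Γ)
    (hmin : ∀ x : ℝ, Dense {y : ℝ | ∃ g ∈ Γ, g x = y})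
    (hnotfree : ∃ g ∈ Γ, g ≠ (1 : ℝ ≃o ℝ) ∧ ∃ x : ℝ, g x = x) :
    (∃ φ : ℝ ≃o ℝ, (∀ x : ℝ, φ x ≠ x) ∧ ∀ g ∈ Γ, ∀ x : ℝ, φ (g x) = g (φ x)) ∨
    (∀ a b a' b' : ℝ, a < b → a' < b' → ∃ g ∈ Γ, g a < a' ∧ b' < g b) :=
  commuting_homeo_or_expansion_general Γ hmin
end

section
/- Let W = W(a,b) be a nonempty reduced word in the free group on two generators a, b whose reduced form carries both positive and negative exponents. Then there exist orientation-preserving homeomorphisms f, g of the real line such that f(0) > 0, g(0) > 0, and W(f,g)(0) < 0, where W(f,g) denotes the homeomorphism obtained by substituting f for a and g for b in W. -/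
/-- A reduced word `w` in two letters carries both positive and negative exponents. -/
def HasBothSigns (w : FreeGroup (Fin 2)) : Prop :=
  (∃ x, (x, true) ∈ w.toWord) ∧ (∃ x, (x, false) ∈ w.toWord)

/-!
Read the word from the right and define the homeomorphisms only on the finitely many points
visited by the orbit of `0`, as finite increasing partial maps; every such partial map extends to
an order automorphism (piecewise-linear interpolation). Let `i⁻¹` be the innermost negative
letter. On the positive subword to its right, `i` moves points of `[0, ∞)` up by `2` while the
other letters squash `[0, ∞)` into `[1/2, 1)`; since that subword does not end in `i`, its value
lies below every value of `i`, so `i⁻¹` may send it to `-1`. From then on the current point is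
the minimum of everything defined so far, and it is not yet in the domain of the next letter (the
word is reduced), so that letter may send it one unit lower.
-/

open Finset

namespace OrderIsoWord

section StrictMonoGraph

def IsStrictMonoGraph {β : Type*} [Preorder β] (s : Finset (β × β)) : Prop :=
  ∀ p ∈ s, ∀ q ∈ s, p.1 < q.1 ↔ p.2 < q.2

namespace IsStrictMonoGraph

variable {β : Type*} [Preorder β] {s t : Finset (β × β)}

lemma mono (hs : IsStrictMonoGraph s) (hts : t ⊆ s) : IsStrictMonoGraph t :=
  fun p hp q hq => hs p (hts hp) q (hts hq)

lemma insert_of_lt [DecidableEq β] (hs : IsStrictMonoGraph s) {u : β × β}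
    (h₁ : ∀ p ∈ s, u.1 < p.1) (h₂ : ∀ p ∈ s, u.2 < p.2) : IsStrictMonoGraph (insert u s) := by
  intro p hp q hq
  rcases mem_insert.1 hp with rfl | hp' <;> rcases mem_insert.1 hq with rfl | hq'
  · exact iff_of_false (lt_irrefl _) (lt_irrefl _)
  · exact iff_of_true (h₁ q hq') (h₂ q hq')
  · exact iff_of_false (h₁ p hp').asymm (h₂ p hp').asymm
  · exact hs p hp' q hq'

end IsStrictMonoGraph

variable {β : Type*} [LinearOrder β]

lemma IsStrictMonoGraph.snd_eq_of_fst_eq {s : Finset (β × β)} (hs : IsStrictMonoGraph s)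
    {p q : β × β} (hp : p ∈ s) (hq : q ∈ s) (h : p.1 = q.1) : p.2 = q.2 :=
  le_antisymm (not_lt.1 fun h' => (hs q hq p hp).2 h' |>.ne h.symm)
    (not_lt.1 fun h' => (hs p hp q hq).2 h' |>.ne h)

lemma StrictMonoOn.isStrictMonoGraph {f : β → β} {t : Set β} (hf : StrictMonoOn f t)
    {s : Finset (β × β)} (hs : ∀ p ∈ s, p.1 ∈ t ∧ p.2 = f p.1) : IsStrictMonoGraph s := by
  intro p hp q hq
  obtain ⟨hpt, hpf⟩ := hs p hp
  obtain ⟨hqt, hqf⟩ := hs q hq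
  rw [hpf, hqf]
  exact (hf.lt_iff_lt hpt hqt).symm

end StrictMonoGraph

section Extension

variable {K : Type*} [Field K] [LinearOrder K] [IsStrictOrderedRing K]

def stretchAbove (c k x : K) : K := if x ≤ c then x else c + k * (x - c)

lemma stretchAbove_strictMono {c k : K} (hk : 0 < k) : StrictMono (stretchAbove c k) := by
  intro a b hab
  unfold stretchAbove
  split_ifs with ha hb hb
  · exact hab
  · exact lt_add_of_le_of_pos ha (mul_pos hk (sub_pos.2 (not_le.1 hb)))
  · exact absurd (hab.le.trans hb) ha
  · gcongr

lemma stretchAbove_stretchAbove_inv {c k : K} (hk : 0 < k) (x : K) :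
    stretchAbove c k (stretchAbove c k⁻¹ x) = x := by
  by_cases hx : x ≤ c
  · simp only [stretchAbove, if_pos hx]
  · have hx' : ¬c + k⁻¹ * (x - c) ≤ c :=
      not_le.2 (lt_add_of_pos_right c (mul_pos (inv_pos.2 hk) (sub_pos.2 (not_le.1 hx))))
    simp only [stretchAbove, if_neg hx, if_neg hx']
    field_simp
    ring

lemma exists_orderIso_fixing_Iic {c z y : K} (hz : c < z) (hy : c < y) :
    ∃ H : K ≃o K, (∀ x ≤ c, H x = x) ∧ H z = y := by
  have hk : 0 < (y - c) / (z - c) := div_pos (sub_pos.2 hy) (sub_pos.2 hz)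
  refine ⟨(stretchAbove_strictMono hk).orderIsoOfRightInverse _ _
    (stretchAbove_stretchAbove_inv hk), fun x hx => if_pos hx, ?_⟩
  change stretchAbove c _ z = y
  rw [stretchAbove, if_neg hz.not_ge, div_mul_cancel₀ _ (sub_pos.2 hz).ne']
  ring

/-- Insert the points in increasing order of their first coordinate; each new point is reached
by composing with an order isomorphism that fixes everything below the earlier values. -/
theorem IsStrictMonoGraph.exists_orderIso {s : Finset (K × K)} (hs : IsStrictMonoGraph s) :
    ∃ F : K ≃o K, ∀ p ∈ s, F p.1 = p.2 := by
  revert hs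
  refine Finset.induction_on_max_value Prod.fst s (fun _ => ⟨OrderIso.refl K, by simp⟩) ?_
  intro a s _ ha ih hs
  obtain ⟨F₀, hF₀⟩ := ih (hs.mono (subset_insert a s))
  by_cases hdup : ∃ q ∈ s, q.1 = a.1
  · obtain ⟨q, hq, hqa⟩ := hdup
    have ha2 : a.2 = q.2 :=
      hs.snd_eq_of_fst_eq (mem_insert_self a s) (mem_insert_of_mem hq) hqa.symm
    refine ⟨F₀, (forall_mem_insert _ _ _).2 ⟨?_, hF₀⟩⟩
    rw [← hqa, hF₀ q hq, ha2]
  push Not at hdup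
  have hlt : ∀ q ∈ s, q.1 < a.1 := fun q hq => (ha q hq).lt_of_ne (hdup q hq)
  set z := F₀ a.1
  have hbelow : ∀ q ∈ s, q.2 < min z a.2 := fun q hq => lt_min
    (hF₀ q hq ▸ F₀.strictMono (hlt q hq))
    ((hs q (mem_insert_of_mem hq) a (mem_insert_self a s)).1 (hlt q hq))
  set c := (insert (min z a.2 - 1) (s.image Prod.snd)).max' (insert_nonempty _ _)
  have hc : c < min z a.2 := by
    refine (max'_lt_iff _ _).2 ((forall_mem_insert _ _ _).2 ⟨by linarith, ?_⟩)
    simpa only [forall_mem_image] using hbelow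
  have hqc : ∀ q ∈ s, q.2 ≤ c :=
    fun q hq => le_max' _ _ (mem_insert_of_mem (mem_image_of_mem _ hq))
  obtain ⟨H, hHfix, hHz⟩ := exists_orderIso_fixing_Iic (lt_min_iff.1 hc).1 (lt_min_iff.1 hc).2
  refine ⟨F₀.trans H, (forall_mem_insert _ _ _).2 ⟨hHz, fun q hq => ?_⟩⟩
  simp only [OrderIso.trans_apply, hF₀ q hq, hHfix _ (hqc q hq)]

end Extension

section Letters

variable {α K : Type*}

def letterGraph (S : α → Finset (K × K)) : α × Bool → Finset (K × K)
  | (a, true) => S a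
  | (a, false) => (S a).map (Equiv.prodComm K K).toEmbedding

def insertLetter [DecidableEq α] [DecidableEq K] (S : α → Finset (K × K)) :
    α × Bool → K × K → α → Finset (K × K)
  | (a, b), p => Function.update S a (insert (cond b p p.swap) (S a))

inductive Reaches (S : α → Finset (K × K)) : List (α × Bool) → K → K → Prop
  | nil (x : K) : Reaches S [] x x
  | cons {ℓ : α × Bool} {L : List (α × Bool)} {x y z : K} :
      Reaches S L x y → (y, z) ∈ letterGraph S ℓ → Reaches S (ℓ :: L) x z

variable {S : α → Finset (K × K)}

@[simp] lemma mem_letterGraph_true {a : α} {p : K × K} :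
    p ∈ letterGraph S (a, true) ↔ p ∈ S a := Iff.rfl

@[simp] lemma mem_letterGraph_false {a : α} {p : K × K} :
    p ∈ letterGraph S (a, false) ↔ p.swap ∈ S a := by
  simp [letterGraph]

lemma swap_mem_letterGraph_inv {ℓ : α × Bool} {p : K × K} :
    p.swap ∈ letterGraph S (ℓ.1, !ℓ.2) ↔ p ∈ letterGraph S ℓ := by
  obtain ⟨a, _ | _⟩ := ℓ <;> simp

lemma isStrictMonoGraph_letterGraph [Preorder K] {ℓ : α × Bool} :
    IsStrictMonoGraph (letterGraph S ℓ) ↔ IsStrictMonoGraph (S ℓ.1) := by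
  obtain ⟨a, _ | _⟩ := ℓ
  · simp only [IsStrictMonoGraph, mem_letterGraph_false]
    refine ⟨fun h p hp q hq => (h p.swap (by simpa) q.swap (by simpa)).symm,
      fun h p hp q hq => (h _ hp _ hq).symm⟩
  · rfl

section Insert

variable [DecidableEq α] [DecidableEq K]

lemma subset_insertLetter (ℓ : α × Bool) (p : K × K) (a : α) : S a ⊆ insertLetter S ℓ p a := by
  obtain ⟨b, _⟩ := ℓ
  by_cases h : a = b
  · subst h; simp [insertLetter]
  · simp [insertLetter, h]

lemma letterGraph_insertLetter_self (ℓ : α × Bool) (p : K × K) :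
    letterGraph (insertLetter S ℓ p) ℓ = insert p (letterGraph S ℓ) := by
  obtain ⟨a, _ | _⟩ := ℓ <;> ext q <;> simp [insertLetter, letterGraph]

lemma mem_letterGraph_insertLetter {ℓ ℓ' : α × Bool} {p q : K × K} :
    q ∈ letterGraph (insertLetter S ℓ p) ℓ' ↔
      (ℓ' = ℓ ∧ q = p) ∨ (ℓ' = (ℓ.1, !ℓ.2) ∧ q = p.swap) ∨ q ∈ letterGraph S ℓ' := by
  obtain ⟨a, b⟩ := ℓ
  obtain ⟨a', b'⟩ := ℓ'
  by_cases h : a' = a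
  · subst h
    cases b <;> cases b' <;> simp [insertLetter, Prod.swap_eq_iff_eq_swap]
  · cases b' <;> simp [insertLetter, h]

lemma isStrictMonoGraph_insertLetter [Preorder K] (hS : ∀ a, IsStrictMonoGraph (S a))
    {ℓ : α × Bool} {p : K × K} (h : IsStrictMonoGraph (insert p (letterGraph S ℓ))) (a : α) :
    IsStrictMonoGraph (insertLetter S ℓ p a) := by
  by_cases ha : a = ℓ.1
  · subst ha
    rwa [← isStrictMonoGraph_letterGraph, letterGraph_insertLetter_self]
  · obtain ⟨b, _⟩ := ℓ
    simpa [insertLetter, ha] using hS a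

end Insert

lemma Reaches.mono {T : α → Finset (K × K)} (hST : ∀ a, S a ⊆ T a) {L : List (α × Bool)}
    {x y : K} (h : Reaches S L x y) : Reaches T L x y := by
  induction h with
  | nil x => exact .nil x
  | @cons ℓ L x y z _ hyz ih =>
    refine .cons ih ?_
    obtain ⟨a, _ | _⟩ := ℓ
    · simpa using hST a (mem_letterGraph_false.1 hyz)
    · exact hST a hyz

lemma Reaches.lift_mk_apply [Preorder K] {F : α → K ≃o K} (hF : ∀ a, ∀ p ∈ S a, F a p.1 = p.2)
    {L : List (α × Bool)} {x y : K} (h : Reaches S L x y) :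
    FreeGroup.lift F (FreeGroup.mk L) x = y := by
  induction h with
  | nil x => simp
  | @cons ℓ L x y z _ hyz ih =>
    rw [FreeGroup.lift_mk, List.map_cons, List.prod_cons, RelIso.mul_apply, ← FreeGroup.lift_mk, ih]
    obtain ⟨a, _ | _⟩ := ℓ
    · have hza : F a z = y := hF a _ (mem_letterGraph_false.1 hyz)
      change (F a)⁻¹ y = z
      rw [← hza]
      exact RelIso.inv_apply_self _ _
    · exact hF a _ hyz

end Letters

section PositiveWords

variable {α K : Type*} [Zero K] [DecidableEq K]

def applyLetters (φ : α → K → K) (L : List (α × Bool)) : K := L.foldr (fun ℓ x => φ ℓ.1 x) 0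

lemma reaches_applyLetters (φ : α → K → K) {L : List (α × Bool)} (hL : ∀ ℓ ∈ L, ℓ.2 = true)
    {T : Finset K} (hT : ∀ M, M <:+ L → applyLetters φ M ∈ T) :
    Reaches (fun a => T.image fun x => (x, φ a x)) L 0 (applyLetters φ L) := by
  induction L with
  | nil => exact .nil 0
  | cons ℓ L ih =>
    obtain ⟨a, b⟩ := ℓ
    obtain rfl : b = true := hL _ List.mem_cons_self
    refine .cons (ih (fun ℓ hℓ => hL ℓ (List.mem_cons_of_mem _ hℓ))
      (fun M hM => hT M (hM.trans (List.suffix_cons _ _)))) ?_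
    exact mem_image_of_mem _ (hT L (List.suffix_cons _ _))

lemma exists_reaches_applyLetters (φ : α → K → K) {L : List (α × Bool)}
    (hL : ∀ ℓ ∈ L, ℓ.2 = true) :
    ∃ S : α → Finset (K × K), (∀ a, ∀ p ∈ S a, p.1 ∈ Set.range (applyLetters φ) ∧ p.2 = φ a p.1) ∧
      (∀ a, (0, φ a 0) ∈ S a) ∧ Reaches S L 0 (applyLetters φ L) := by
  set T : Finset K := (L.tails.map (applyLetters φ)).toFinset
  have hT : ∀ M, M <:+ L → applyLetters φ M ∈ T :=
    fun M hM => List.mem_toFinset.2 (List.mem_map.2 ⟨M, (List.mem_tails _ _).2 hM, rfl⟩)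
  refine ⟨fun a => T.image fun x => (x, φ a x), fun a p hp => ?_,
    fun a => mem_image_of_mem _ (hT [] List.nil_suffix), reaches_applyLetters φ hL hT⟩
  obtain ⟨x, hx, rfl⟩ := mem_image.1 hp
  obtain ⟨M, -, rfl⟩ := List.mem_map.1 (List.mem_toFinset.1 hx)
  exact ⟨⟨M, rfl⟩, rfl⟩

end PositiveWords

/-- `y` is the least coordinate of all points, and it occurs only as a domain point of the
inverse of the last letter `ℓ`; so every letter that does not cancel `ℓ` may send `y` lower. -/
structure IsLowRealization {α K : Type*} [LinearOrder K] [Zero K] (S : α → Finset (K × K))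
    (ℓ : α × Bool) (L : List (α × Bool)) (y : K) : Prop where
  strictMonoGraph : ∀ a, IsStrictMonoGraph (S a)
  exists_zero_pos : ∀ a, ∃ v, 0 < v ∧ (0, v) ∈ S a
  reaches : Reaches S (ℓ :: L) 0 y
  neg : y < 0
  floor : ∀ ℓ', ∀ p ∈ letterGraph S ℓ', (ℓ' = (ℓ.1, !ℓ.2) ∧ p.1 = y) ∨ y < p.1

section Construction

variable {α K : Type*} [Field K] [LinearOrder K] [IsStrictOrderedRing K] [DecidableEq α]

def boost (i a : α) (x : K) : K := if a = i then x + 2 else (x + 1) / (x + 2)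

lemma boost_pos {i a : α} {x : K} (hx : 0 ≤ x) : 0 < boost i a x := by
  unfold boost
  split_ifs <;> positivity

lemma two_le_boost_self {i : α} {x : K} (hx : 0 ≤ x) : 2 ≤ boost i i x := by
  simp [boost, hx]

lemma boost_lt_one {i a : α} (ha : a ≠ i) {x : K} (hx : 0 ≤ x) : boost i a x < 1 := by
  rw [boost, if_neg ha, div_lt_one (by positivity)]
  linarith

lemma boost_strictMonoOn (i a : α) : StrictMonoOn (boost (K := K) i a) (Set.Ici 0) := by
  intro x (hx : 0 ≤ x) y (hy : 0 ≤ y) hxy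
  unfold boost
  split_ifs
  · linarith
  · rw [div_lt_div_iff₀ (by positivity) (by positivity)]
    linarith

lemma IsLowRealization.cons {S : α → Finset (K × K)} {ℓ ℓ' : α × Bool} {L : List (α × Bool)}
    {y : K} (h : IsLowRealization S ℓ L y) (hℓ : ℓ'.1 = ℓ.1 → ℓ'.2 = ℓ.2) :
    IsLowRealization (insertLetter S ℓ' (y, y - 1)) ℓ' (ℓ :: L) (y - 1) := by
  have hne : ℓ' ≠ (ℓ.1, !ℓ.2) := by
    rintro rfl
    simp at hℓ
  have hle : ∀ ℓ'', ∀ p ∈ letterGraph S ℓ'', y ≤ p.1 := fun ℓ'' p hp =>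
    (h.floor ℓ'' p hp).elim (fun h => h.2.ge) le_of_lt
  refine ⟨isStrictMonoGraph_insertLetter h.strictMonoGraph ?_, fun a => ?_, ?_, by linarith [h.neg],
    fun ℓ'' p hp => ?_⟩
  · refine (isStrictMonoGraph_letterGraph.2 (h.strictMonoGraph _)).insert_of_lt
      (fun p hp => ?_) (fun p hp => ?_)
    · exact (h.floor ℓ' p hp).resolve_left fun h => hne h.1
    · exact (sub_one_lt y).trans_le (hle _ _ (swap_mem_letterGraph_inv.2 hp))
  · obtain ⟨v, hv, hv0⟩ := h.exists_zero_pos a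
    exact ⟨v, hv, subset_insertLetter _ _ _ hv0⟩
  · refine .cons (h.reaches.mono (subset_insertLetter _ _)) ?_
    rw [letterGraph_insertLetter_self]
    exact mem_insert_self _ _
  · rcases mem_letterGraph_insertLetter.1 hp with ⟨-, rfl⟩ | ⟨hℓ'', rfl⟩ | hp
    · exact .inr (sub_one_lt y)
    · exact .inl ⟨hℓ'', rfl⟩
    · exact .inr (by linarith [hle ℓ'' p hp])

lemma applyLetters_boost_nonneg (i : α) : ∀ L : List (α × Bool), (0 : K) ≤ applyLetters (boost i) L
  | [] => le_rfl
  | _ :: L => (boost_pos (applyLetters_boost_nonneg i L)).le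

lemma applyLetters_boost_lt_two {i : α} {P : List (α × Bool)} (hP : ∀ t ∈ P, t.2 = true)
    (hred : FreeGroup.IsReduced ((i, false) :: P)) : applyLetters (boost (K := K) i) P < 2 := by
  cases P with
  | nil => norm_num [applyLetters]
  | cons t P =>
    obtain ⟨a, c⟩ := t
    obtain rfl : c = true := hP _ List.mem_cons_self
    have hai : a ≠ i := fun hai => by simpa [hai] using (FreeGroup.isReduced_cons_cons.1 hred).1
    exact (boost_lt_one hai (applyLetters_boost_nonneg i P)).trans one_lt_two

lemma exists_isLowRealization_of_forall_pos {ℓ : α × Bool} {P : List (α × Bool)}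
    (hℓ : ℓ.2 = false) (hP : ∀ t ∈ P, t.2 = true) (hred : FreeGroup.IsReduced (ℓ :: P)) :
    ∃ (S : α → Finset (K × K)) (y : K), IsLowRealization S ℓ P y := by
  obtain ⟨i, b⟩ := ℓ
  obtain rfl : b = false := hℓ
  obtain ⟨S, hS, hS0, hreach⟩ := exists_reaches_applyLetters (boost (K := K) i) hP
  set y : K := applyLetters (boost i) P
  have hS' : ∀ a, ∀ p ∈ S a, 0 ≤ p.1 ∧ p.2 = boost i a p.1 := fun a p hp => by
    obtain ⟨⟨M, hM⟩, hpa⟩ := hS a p hp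
    exact ⟨hM ▸ applyLetters_boost_nonneg i M, hpa⟩
  have hcoord : ∀ ℓ', ∀ p ∈ letterGraph S ℓ', 0 ≤ p.1 := by
    rintro ⟨a, _ | _⟩ p hp
    · obtain ⟨hp2, hp1⟩ := hS' a _ (mem_letterGraph_false.1 hp)
      exact (boost_pos hp2).le.trans_eq hp1.symm
    · exact (hS' a p hp).1
  have hy0 : 0 ≤ y := applyLetters_boost_nonneg i P
  have hy2 : y < 2 := applyLetters_boost_lt_two hP hred
  have hmono : ∀ a, IsStrictMonoGraph (S a) :=
    fun a => StrictMonoOn.isStrictMonoGraph (boost_strictMonoOn i a) (hS' a)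
  refine ⟨insertLetter S (i, false) (y, -1), -1, ⟨isStrictMonoGraph_insertLetter hmono ?_,
    fun a => ⟨boost i a 0, boost_pos le_rfl, subset_insertLetter _ _ _ (hS0 a)⟩,
    .cons (hreach.mono (subset_insertLetter _ _))
      (by rw [letterGraph_insertLetter_self]; exact mem_insert_self _ _),
    by norm_num, fun ℓ' p hp => ?_⟩⟩
  · refine (isStrictMonoGraph_letterGraph.2 (hmono i)).insert_of_lt (fun p hp => ?_)
      (fun p hp => ?_) <;> obtain ⟨hp2, hp1⟩ := hS' i _ (mem_letterGraph_false.1 hp)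
    · exact hy2.trans_le ((two_le_boost_self hp2).trans_eq hp1.symm)
    · exact neg_one_lt_zero.trans_le hp2
  · rcases mem_letterGraph_insertLetter.1 hp with ⟨-, rfl⟩ | ⟨hℓ', rfl⟩ | hp
    · exact .inr (neg_one_lt_zero.trans_le hy0)
    · exact .inl ⟨hℓ', rfl⟩
    · exact .inr (neg_one_lt_zero.trans_le (hcoord ℓ' p hp))

lemma exists_isLowRealization {ℓ : α × Bool} {L : List (α × Bool)}
    (hred : FreeGroup.IsReduced (ℓ :: L)) (hneg : ∃ t ∈ ℓ :: L, t.2 = false) :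
    ∃ (S : α → Finset (K × K)) (y : K), IsLowRealization S ℓ L y := by
  induction L generalizing ℓ with
  | nil => exact exists_isLowRealization_of_forall_pos (by simpa using hneg) (by simp) hred
  | cons ℓ' L ih =>
    by_cases hpos : ∀ t ∈ ℓ' :: L, t.2 = true
    · refine exists_isLowRealization_of_forall_pos ?_ hpos hred
      obtain ⟨t, ht, htf⟩ := hneg
      rcases List.mem_cons.1 ht with rfl | ht
      · exact htf
      · simp [hpos t ht] at htf
    · push Not at hpos
      obtain ⟨S, y, h⟩ := ih (FreeGroup.isReduced_cons_cons.1 hred).2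
        (hpos.imp fun t ht => ⟨ht.1, by simpa using ht.2⟩)
      exact ⟨_, _, h.cons (FreeGroup.isReduced_cons_cons.1 hred).1⟩

end Construction

theorem exists_orderIso_lift_apply_zero_neg {α K : Type*} [DecidableEq α] [Field K]
    [LinearOrder K] [IsStrictOrderedRing K] (w : FreeGroup α) (hw : ∃ a, (a, false) ∈ w.toWord) :
    ∃ F : α → K ≃o K, (∀ a, 0 < F a 0) ∧ FreeGroup.lift F w 0 < 0 := by
  obtain ⟨a, ha⟩ := hw
  obtain ⟨ℓ, L, hwL⟩ := List.exists_cons_of_ne_nil (List.ne_nil_of_mem ha)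
  obtain ⟨S, y, h⟩ := exists_isLowRealization (K := K) (hwL ▸ FreeGroup.isReduced_toWord)
    ⟨(a, false), hwL ▸ ha, rfl⟩
  choose F hF using fun a => (h.strictMonoGraph a).exists_orderIso
  refine ⟨F, fun b => ?_, ?_⟩
  · obtain ⟨v, hv, hv0⟩ := h.exists_zero_pos b
    exact (hF b _ hv0).symm ▸ hv
  · rw [← FreeGroup.mk_toWord (x := w), hwL, h.reaches.lift_mk_apply hF]
    exact h.neg

end OrderIsoWord

theorem exists_homeos_violating_word_general
    (w : FreeGroup (Fin 2)) (hsigns : HasBothSigns w) :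
    ∃ f g : ℝ ≃o ℝ, 0 < f 0 ∧ 0 < g 0 ∧ ((FreeGroup.lift ![f, g]) w) 0 < 0 := by
  obtain ⟨F, hF0, hFw⟩ := OrderIsoWord.exists_orderIso_lift_apply_zero_neg (K := ℝ) w hsigns.2
  refine ⟨F 0, F 1, hF0 0, hF0 1, ?_⟩
  have hF : ![F 0, F 1] = F := by
    ext i : 1
    fin_cases i <;> rfl
  rwa [hF]

/-- For every nonempty reduced word `W(a,b)` in two letters carrying both positive and
negative exponents, there are orientation-preserving homeomorphisms `f, g` of the real
line (formalized as order-isomorphisms of `ℝ`) with `f(0) > 0`, `g(0) > 0`, and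
`W(f,g)(0) < 0`. -/
theorem exists_homeos_violating_word
    (w : FreeGroup (Fin 2)) (hw : w ≠ 1) (hsigns : HasBothSigns w) :
    ∃ f g : ℝ ≃o ℝ, 0 < f 0 ∧ 0 < g 0 ∧ ((FreeGroup.lift ![f, g]) w) 0 < 0 :=
  exists_homeos_violating_word_general w hsigns
end

section
/- Let W = W(a,b) be a nonempty reduced word in the free group F₂ = ⟨a,b⟩ on two generators whose reduced form carries both positive and negative exponents. Then F₂ admits a left-order ≼ such that a ≻ 1, b ≻ 1, and W(a,b) ≺ 1; in particular, F₂ admits a left-order that is not a W-order. -/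
/-- A subset of a group (given by its indicator function `P : Γ → Bool`) is the positive
cone of a left-order if it is closed under multiplication, does not contain `1`, and
every `g ≠ 1` lies in exactly one of `P`, `P⁻¹`. -/
def IsLeftOrderCone {Γ : Type*} [Group Γ] (P : Γ → Bool) : Prop :=
  (∀ a b : Γ, P a = true → P b = true → P (a * b) = true) ∧
  P 1 = false ∧
  (∀ g : Γ, g ≠ 1 → (P g = true ↔ P g⁻¹ = false))

/-- A left-order with positive cone `P` is a `W`-order if `W(f,g)` is positive whenever
`f` and `g` are. -/
def IsWOrder {Γ : Type*} [Group Γ] (w : FreeGroup (Fin 2)) (P : Γ → Bool) : Prop :=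
  ∀ f g : Γ, P f = true → P g = true → P ((FreeGroup.lift ![f, g]) w) = true


/-!
A countable family of order-preserving actions of `F₂` on `ℚ` that together act faithfully
yields a left order: list all pairs (action, point), and call `g` positive when, at the first
pair it moves, it moves the point up. So it suffices to find one action in which `a` and `b`
move `0` up while `W` moves `0` down, and to list `0` in that action first.

Write the reduced word as `W = A₀ d⁻¹ V` with `V` positive, and let the letters act on `[0, 4)`
by the contractions `x ↦ x/8 + 7/2` for `d` and `x ↦ x/8 + 3/2` for the other letter. Then `V`
keeps `0` in `[0, 4)`, and even sends it into `[0, 2)` because the letter of `V` next to `d⁻¹`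
is not `d`. Let `d⁻¹` send this point to `-1` and the letters of `A₀` walk it down through
`-2, -3, …`. Reducedness makes the finitely many values prescribed to each generator
order-compatible, so by back and forth each generator extends to an order automorphism of `ℚ`.
Faithfulness comes from the same construction applied to `u` or `u⁻¹`, for every `u ≠ 1`.
-/

open Function
open FreeGroup (lift mk of IsReduced)

variable {α β : Type*}

def BothLt [LT α] [LT β] (p q : α × β) : Prop := p.1 < q.1 ∧ p.2 < q.2

theorem cmp_eq_cmp_of_isChain_bothLt [LinearOrder α] [LinearOrder β] {s : Set (α × β)}
    (hs : IsChain BothLt s) {p q : α × β} (hp : p ∈ s) (hq : q ∈ s) :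
    cmp p.1 q.1 = cmp p.2 q.2 := by
  rcases eq_or_ne p q with rfl | hne
  · simp
  rcases hs hp hq hne with h | h
  · rw [(cmp_eq_lt_iff _ _).mpr h.1, (cmp_eq_lt_iff _ _).mpr h.2]
  · rw [(cmp_eq_gt_iff _ _).mpr h.1, (cmp_eq_gt_iff _ _).mpr h.2]

namespace Order.PartialIso

variable [LinearOrder α] [LinearOrder β]

/-- Back and forth, started from `f` instead of the empty partial isomorphism. -/
theorem exists_orderIso_extends [Countable α] [DenselyOrdered α] [NoMinOrder α] [NoMaxOrder α]
    [Nonempty α] [Countable β] [DenselyOrdered β] [NoMinOrder β] [NoMaxOrder β] [Nonempty β]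
    (f : PartialIso α β) : ∃ F : α ≃o β, ∀ p ∈ f.val, F p.1 = p.2 := by
  cases nonempty_encodable α
  cases nonempty_encodable β
  let cofinals : α ⊕ β → Cofinal (PartialIso α β) := fun p ↦
    Sum.recOn p (definedAtLeft β) (definedAtRight α)
  let I : Ideal (PartialIso α β) := idealOfCofinals f cofinals
  let F a := funOfIdeal a I (cofinal_meets_idealOfCofinals _ cofinals (Sum.inl a))
  let G b := invOfIdeal b I (cofinal_meets_idealOfCofinals _ cofinals (Sum.inr b))
  have compat : ∀ g ∈ I, ∀ g' ∈ I, ∀ p ∈ g.val, ∀ q ∈ g'.val,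
      cmp p.1 q.1 = cmp p.2 q.2 := by
    intro g hg g' hg' p hp q hq
    obtain ⟨m, -, hgm, hg'm⟩ := I.directed _ hg _ hg'
    exact m.prop p (hgm hp) q (hg'm hq)
  refine ⟨OrderIso.ofCmpEqCmp (fun a ↦ (F a).val) (fun b ↦ (G b).val) fun a b ↦ ?_,
    fun p hp ↦ ?_⟩
  · obtain ⟨g, hg, ha⟩ := (F a).prop
    obtain ⟨g', hg', hb⟩ := (G b).prop
    exact compat g hg g' hg' _ ha _ hb
  · obtain ⟨g, hg, ha⟩ := (F p.1).prop
    have h := compat g hg f (mem_idealOfCofinals _ _) _ ha p hp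
    rw [cmp_self_eq_eq, eq_comm, cmp_eq_eq_iff] at h
    exact h

end Order.PartialIso

section Walk

variable [LinearOrder β]

/-- The pair `(x, F x)` that the letter `l` must realize for `mk [l]` to send `b` to `a`. -/
def stepPair (l : α × Bool) (a b : β) : β × β := if l.2 then (b, a) else (a, b)

theorem lift_mk_singleton_apply (F : α → β ≃o β) {l : α × Bool} {a b : β}
    (h : F l.1 (stepPair l a b).1 = (stepPair l a b).2) : lift F (mk [l]) b = a := by
  obtain ⟨i, _ | _⟩ := l
  · change (lift F (of i)⁻¹) b = a
    rw [map_inv, FreeGroup.lift_apply_of]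
    exact (F i).symm_apply_eq.mpr h.symm
  · change lift F (of i) b = a
    rw [FreeGroup.lift_apply_of]
    exact h

theorem lift_mk_apply_of_stepPair (F : α → β ≃o β) {L : List (α × Bool)} {p : ℕ → β}
    (h : ∀ j (hj : j < L.length),
      F L[j].1 (stepPair L[j] (p j) (p (j + 1))).1 = (stepPair L[j] (p j) (p (j + 1))).2) :
    lift F (mk L) (p L.length) = p 0 := by
  induction L generalizing p with
  | nil => rfl
  | cons l L ih =>
    have hL : lift F (mk L) (p (L.length + 1)) = p 1 :=
      ih (p := fun j ↦ p (j + 1)) fun j hj ↦ h (j + 1) (by simpa using hj)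
    rw [← List.singleton_append, ← FreeGroup.mul_mk, map_mul, RelIso.mul_apply,
      List.singleton_append, List.length_cons, hL]
    exact lift_mk_singleton_apply F (h 0 (by simp))

theorem bothLt_stepPair {L : List (α × Bool)} (hL : IsReduced L) {p : ℕ → β}
    (hp : StrictMonoOn p (Set.Iic L.length)) {j j' : ℕ} (hjj' : j < j') (hj' : j' < L.length)
    (hlet : L[j].1 = L[j'].1) :
    BothLt (stepPair L[j] (p j) (p (j + 1))) (stepPair L[j'] (p j') (p (j' + 1))) := by
  have mono : ∀ a b, a < b → b ≤ L.length → p a < p b := fun a b hab hb ↦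
    hp (Set.mem_Iic.mpr (by omega)) (Set.mem_Iic.mpr hb) hab
  have h0 := mono j (j + 1) (by omega) (by omega)
  have h1 := mono j' (j' + 1) (by omega) (by omega)
  rcases Nat.lt_or_ge (j + 1) j' with hfar | hnear
  · have h2 := mono (j + 1) j' hfar (by omega)
    unfold stepPair BothLt
    split_ifs <;> simp only <;> constructor <;> order
  · obtain rfl : j' = j + 1 := by omega
    have hsign : L[j].2 = L[j + 1].2 := List.isChain_iff_getElem.mp hL j hj' hlet
    unfold stepPair BothLt
    rw [← hsign]
    split_ifs <;> simp only <;> constructor <;> order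

variable [DecidableEq α]

def walkPairs (L : List (α × Bool)) (p : ℕ → β) (i : α) : Finset (β × β) :=
  (Finset.univ.filter fun j : Fin L.length ↦ L[j].1 = i).image
    fun j : Fin L.length ↦ stepPair L[j] (p j) (p (j + 1 : ℕ))

theorem mem_walkPairs {L : List (α × Bool)} {p : ℕ → β} {i : α} {q : β × β} :
    q ∈ walkPairs L p i ↔
      ∃ (j : ℕ) (hj : j < L.length), L[j].1 = i ∧ stepPair L[j] (p j) (p (j + 1)) = q := by
  simp [walkPairs, Fin.exists_iff]

theorem lift_mk_apply_of_walkPairs (F : α → β ≃o β) {L : List (α × Bool)} {p : ℕ → β}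
    (hF : ∀ i, ∀ q ∈ walkPairs L p i, F i q.1 = q.2) : lift F (mk L) (p L.length) = p 0 :=
  lift_mk_apply_of_stepPair F fun j hj ↦ hF _ _ (mem_walkPairs.mpr ⟨j, hj, rfl, rfl⟩)

theorem isChain_walkPairs {L : List (α × Bool)} (hL : IsReduced L) {p : ℕ → β}
    (hp : StrictMonoOn p (Set.Iic L.length)) (i : α) :
    IsChain BothLt (walkPairs L p i : Set (β × β)) := by
  intro q hq q' hq' hne
  obtain ⟨j, hj, hji, rfl⟩ := mem_walkPairs.mp hq
  obtain ⟨j', hj', hj'i, rfl⟩ := mem_walkPairs.mp hq'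
  rcases lt_trichotomy j j' with h | rfl | h
  · exact .inl (bothLt_stepPair hL hp h hj' (hji.trans hj'i.symm))
  · exact absurd rfl hne
  · exact .inr (bothLt_stepPair hL hp h hj (hj'i.trans hji.symm))

end Walk

theorem List.exists_eq_append_cons_of_exists_not {P : α → Prop} {l : List α}
    (h : ∃ x ∈ l, ¬ P x) : ∃ s x t, l = s ++ x :: t ∧ ¬ P x ∧ ∀ y ∈ t, P y := by
  induction l with
  | nil => simp at h
  | cons a l ih =>
    by_cases hl : ∃ x ∈ l, ¬ P x
    · obtain ⟨s, x, t, rfl, hx, ht⟩ := ih hl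
      exact ⟨a :: s, x, t, rfl, hx, ht⟩
    · simp only [not_exists, not_and, not_not] at hl
      have ha : ¬ P a := by
        obtain ⟨x, hx, hPx⟩ := h
        rcases List.mem_cons.mp hx with rfl | hx
        · exact hPx
        · exact absurd (hl x hx) hPx
      exact ⟨[], a, l, rfl, ha, hl⟩

section Contraction

variable [DecidableEq α]

/-- On `[0, 4)` the letter `d` maps into `[7/2, 4)` and every other letter into `[3/2, 2)`. -/
def contraction (d i : α) (x : ℚ) : ℚ := x / 8 + if i = d then 7 / 2 else 3 / 2

def contractionWord (d : α) (V : List (α × Bool)) : ℚ :=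
  V.foldr (fun l x ↦ contraction d l.1 x) 0

variable {d : α}

theorem contraction_strictMono (i : α) : StrictMono (contraction d i) := fun x y h ↦ by
  unfold contraction
  linarith

theorem three_halves_le_contraction (i : α) {x : ℚ} (hx : 0 ≤ x) :
    3 / 2 ≤ contraction d i x := by
  unfold contraction
  split_ifs <;> linarith

theorem contractionWord_mem_Ico (V : List (α × Bool)) : contractionWord d V ∈ Set.Ico 0 4 := by
  induction V with
  | nil => norm_num [contractionWord]
  | cons l V ih =>
    obtain ⟨h0, h4⟩ := ih
    change contraction d l.1 (contractionWord d V) ∈ Set.Ico 0 4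
    unfold contraction
    constructor <;> split_ifs <;> linarith

theorem contractionWord_lt_two {V : List (α × Bool)} (hV : ∀ l ∈ V.head?, l.1 ≠ d) :
    contractionWord d V < 2 := by
  cases V with
  | nil => norm_num [contractionWord]
  | cons l V =>
    have h4 := (contractionWord_mem_Ico (d := d) V).2
    change contraction d l.1 (contractionWord d V) < 2
    unfold contraction
    rw [if_neg (hV l rfl)]
    linarith

theorem lift_mk_apply_zero_of_contraction (F : α → ℚ ≃o ℚ) {V : List (α × Bool)}
    (hV : ∀ l ∈ V, l.2 = true)
    (hF : ∀ t, t <:+ V → ∀ i,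
      F i (contractionWord d t) = contraction d i (contractionWord d t)) :
    lift F (mk V) 0 = contractionWord d V := by
  induction V with
  | nil => rfl
  | cons l V ih =>
    rw [← List.singleton_append, ← FreeGroup.mul_mk, map_mul, RelIso.mul_apply,
      ih (fun l' hl' ↦ hV l' (List.mem_cons_of_mem _ hl'))
        (fun t ht ↦ hF t (ht.trans (List.suffix_cons _ _)))]
    apply lift_mk_singleton_apply
    rw [stepPair, if_pos (hV l List.mem_cons_self)]
    exact hF V (List.suffix_cons _ _) l.1

end Contraction

theorem exists_toWord_eq_append_neg_append_pos [DecidableEq α] {u : FreeGroup α}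
    (hu : ∃ i, (i, false) ∈ u.toWord) :
    ∃ A₀ d V, u.toWord = A₀ ++ (d, false) :: V ∧ (∀ l ∈ V, l.2 = true) ∧
      ∀ l ∈ V.head?, l.1 ≠ d := by
  obtain ⟨A₀, ⟨d, s⟩, V, hsplit, hs, hV⟩ :=
    List.exists_eq_append_cons_of_exists_not (P := fun l : α × Bool ↦ l.2 = true)
      (by obtain ⟨i, hi⟩ := hu; exact ⟨_, hi, Bool.false_ne_true⟩)
  simp only [Bool.not_eq_true] at hs
  subst hs
  refine ⟨A₀, d, V, hsplit, hV, fun l hl hld ↦ ?_⟩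
  obtain ⟨V', rfl⟩ : ∃ V', V = l :: V' := by
    cases V with
    | nil => simp at hl
    | cons a V' => exact ⟨V', by simpa using hl⟩
  have hjunction : IsReduced [(d, false), l] :=
    (FreeGroup.isReduced_toWord (x := u)).infix ⟨A₀, V', by simp [hsplit]⟩
  have := (FreeGroup.isReduced_cons_cons.mp hjunction).1 hld.symm
  simp [hV l List.mem_cons_self] at this

def descent (n : ℕ) (y : ℚ) (j : ℕ) : ℚ := if j < n then (j : ℚ) - n else y

theorem descent_strictMonoOn {n : ℕ} {y : ℚ} (hy : 0 ≤ y) :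
    StrictMonoOn (descent n y) (Set.Iic n) := by
  intro a _ b hb hab
  have ha : a < n := lt_of_lt_of_le hab hb
  have hab' : (a : ℚ) < b := by exact_mod_cast hab
  have hbn : (b : ℚ) ≤ n := by exact_mod_cast Set.mem_Iic.mp hb
  simp only [descent, if_pos ha]
  split_ifs <;> linarith

theorem bothLt_of_mem_walkPairs_descent [DecidableEq α] {A₀ : List (α × Bool)} {d i : α}
    {y : ℚ} (hy : y < 2) {q : ℚ × ℚ}
    (hq : q ∈ walkPairs (A₀ ++ [(d, false)]) (descent (A₀ ++ [(d, false)]).length y) i) :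
    BothLt q (0, contraction d i 0) := by
  set A := A₀ ++ [(d, false)]
  obtain ⟨j, hj, rfl, rfl⟩ := mem_walkPairs.mp hq
  have hc := three_halves_le_contraction (d := d) A[j].1 le_rfl
  have hpj : descent A.length y j = (j : ℚ) - A.length := if_pos hj
  have hjA : (j : ℚ) + 1 ≤ A.length := by exact_mod_cast hj
  rcases Nat.lt_or_ge (j + 1) A.length with hj1 | hj1
  · have hpj1 : descent A.length y (j + 1) = ((j + 1 : ℕ) : ℚ) - A.length := if_pos hj1
    have hjA' : (j : ℚ) + 1 + 1 ≤ A.length := by exact_mod_cast hj1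
    push_cast at hpj1
    unfold stepPair BothLt
    split_ifs <;> constructor <;> simp only <;> linarith
  · obtain rfl : j = A₀.length := by simp [A] at hj hj1; omega
    have hlast : A[A₀.length] = (d, false) := by simp [A]
    have hpm : descent A.length y (A₀.length + 1) = y := if_neg (by simp [A])
    have hcd : contraction d d 0 = 7 / 2 := by norm_num [contraction]
    simp only [BothLt, hlast, stepPair, Bool.false_eq_true, if_false, hpj, hpm, hcd]
    constructor <;> linarith

theorem exists_lift_generators_pos_word_neg [DecidableEq α] {u : FreeGroup α}
    (hu : ∃ i, (i, false) ∈ u.toWord) :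
    ∃ F : α → ℚ ≃o ℚ, (∀ i, 0 < F i 0) ∧ lift F u 0 < 0 := by
  obtain ⟨A₀, d, V, hword, hV, hVhead⟩ := exists_toWord_eq_append_neg_append_pos hu
  set A := A₀ ++ [(d, false)]
  have hA : IsReduced A :=
    (FreeGroup.isReduced_toWord (x := u)).infix ⟨[], V, by simp [hword, A]⟩
  set y := contractionWord d V with hy
  let p := descent A.length y
  let Z : Finset ℚ := (V.tails.map (contractionWord d)).toFinset
  have hZ : ∀ z ∈ Z, 0 ≤ z := by
    intro z hz
    obtain ⟨t, -, rfl⟩ := List.mem_map.mp (List.mem_toFinset.mp hz)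
    exact (contractionWord_mem_Ico t).1
  let P : α → Finset (ℚ × ℚ) := fun i ↦
    walkPairs A p i ∪ Z.image fun z ↦ (z, contraction d i z)
  have hP : ∀ i, IsChain BothLt (P i : Set (ℚ × ℚ)) := by
    intro i
    simp only [P, Finset.coe_union, Finset.coe_image]
    refine isChain_union.mpr ⟨isChain_walkPairs hA
      (descent_strictMonoOn (contractionWord_mem_Ico V).1) i, ?_, ?_⟩
    · exact (isChain_of_trichotomous (r := (· < ·)) _).image_of_map_rel _ _ _
        fun x y hxy ↦ ⟨hxy, contraction_strictMono i hxy⟩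
    · rintro q hq _ ⟨z, hz, rfl⟩ -
      obtain ⟨h1, h2⟩ := bothLt_of_mem_walkPairs_descent (contractionWord_lt_two hVhead) hq
      exact .inl ⟨h1.trans_le (hZ z hz),
        h2.trans_le ((contraction_strictMono i).monotone (hZ z hz))⟩
  choose F hF using fun i ↦ Order.PartialIso.exists_orderIso_extends
    ⟨P i, fun _ hq _ hq' ↦ cmp_eq_cmp_of_isChain_bothLt (hP i) hq hq'⟩
  have hcontr : ∀ t, t <:+ V → ∀ i,
      F i (contractionWord d t) = contraction d i (contractionWord d t) := fun t ht i ↦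
    hF i _ (Finset.mem_union_right _ (Finset.mem_image_of_mem _
      (List.mem_toFinset.mpr (List.mem_map_of_mem ((List.mem_tails _ _).mpr ht)))))
  refine ⟨F, fun i ↦ ?_, ?_⟩
  · rw [show F i 0 = contraction d i 0 from hcontr [] List.nil_suffix i]
    exact lt_of_lt_of_le (by norm_num) (three_halves_le_contraction i le_rfl)
  · have hpA : p A.length = y := if_neg (lt_irrefl _)
    rw [← FreeGroup.mk_toWord (x := u), hword, ← List.singleton_append, ← List.append_assoc,
      ← FreeGroup.mul_mk, map_mul, RelIso.mul_apply,
      lift_mk_apply_zero_of_contraction F hV hcontr, ← hy, ← hpA,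
      lift_mk_apply_of_walkPairs F fun i q hq ↦ hF i q (Finset.mem_union_left _ hq)]
    have hA0 : 0 < A.length := by simp [A]
    have : (0 : ℚ) < A.length := by exact_mod_cast hA0
    simp only [p, descent, if_pos hA0, Nat.cast_zero]
    linarith

theorem exists_lift_ne_one [DecidableEq α] {u : FreeGroup α} (hu : u ≠ 1) :
    ∃ F : α → ℚ ≃o ℚ, lift F u ≠ 1 := by
  obtain ⟨⟨i, s⟩, hl⟩ := List.exists_mem_of_ne_nil _ (mt FreeGroup.toWord_eq_nil_iff.mp hu)
  cases s
  · obtain ⟨F, -, hF⟩ := exists_lift_generators_pos_word_neg ⟨i, hl⟩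
    exact ⟨F, fun h ↦ by rw [h] at hF; exact lt_irrefl _ hF⟩
  · obtain ⟨F, -, hF⟩ := exists_lift_generators_pos_word_neg (u := u⁻¹)
      ⟨i, by
        simp only [FreeGroup.toWord_inv, FreeGroup.invRev, List.mem_reverse, List.mem_map]
        exact ⟨(i, true), hl, rfl⟩⟩
    exact ⟨F, fun h ↦ by rw [map_inv, h, inv_one] at hF; exact lt_irrefl _ hF⟩

theorem exists_injective_pi_extending_lift [DecidableEq α] (F : α → ℚ ≃o ℚ) :
    ∃ ρ : FreeGroup α →* (Option {u : FreeGroup α // u ≠ 1} → ℚ ≃o ℚ),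
      Injective ρ ∧ ∀ u, ρ u none = lift F u := by
  choose G hG using fun u : {u : FreeGroup α // u ≠ 1} ↦ exists_lift_ne_one u.2
  refine ⟨MonoidHom.pi fun k ↦ lift (k.elim F G), (injective_iff_map_eq_one _).mpr fun u hu ↦ ?_,
    fun u ↦ rfl⟩
  by_contra h
  exact hG ⟨u, h⟩ (congrFun hu (some ⟨u, h⟩))

theorem exists_injective_nat_eq_zero (γ : Type*) [Countable γ] (b : γ) :
    ∃ e : γ → ℕ, Injective e ∧ e b = 0 := by
  classical
  obtain ⟨c, hc⟩ := Countable.exists_injective_nat γ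
  refine ⟨fun x ↦ if x = b then 0 else c x + 1, fun x y h ↦ ?_, if_pos rfl⟩
  simp only at h
  split_ifs at h with hx hy hy
  · exact hx.trans hy.symm
  · exact hc (by omega)

theorem isLeftOrderCone_decide {Γ : Type*} [Group Γ] {C : Γ → Prop} [DecidablePred C]
    (hmul : ∀ a b, C a → C b → C (a * b)) (hone : ¬ C 1)
    (hinv : ∀ g ≠ 1, C g ↔ ¬ C g⁻¹) :
    IsLeftOrderCone fun g ↦ decide (C g) := by
  refine ⟨fun a b ha hb ↦ ?_, decide_eq_false hone, fun g hg ↦ ?_⟩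
  · simp only [decide_eq_true_eq] at ha hb ⊢
    exact hmul a b ha hb
  · simpa using hinv g hg

theorem IsLeftOrderCone.comp {Γ Δ : Type*} [Group Γ] [Group Δ] {P : Δ → Bool}
    (hP : IsLeftOrderCone P) {φ : Γ →* Δ} (hφ : Injective φ) :
    IsLeftOrderCone (P ∘ φ) := by
  obtain ⟨hmul, hone, hinv⟩ := hP
  refine ⟨fun a b ha hb ↦ ?_, by simpa using hone, fun g hg ↦ ?_⟩
  · simpa using hmul _ _ ha hb
  · simpa using hinv (φ g) ((map_ne_one_iff φ hφ).mpr hg)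

section MovesUpFirst

variable {ι : Type*} [LinearOrder β]

def MovesUpFirst (e : ι × β → ℕ) (f : ι → β ≃o β) : Prop :=
  ∃ i x, x < f i x ∧ ∀ j y, e (j, y) < e (i, x) → f j y = y

theorem exists_first_moved (e : ι × β → ℕ) {f : ι → β ≃o β} (hf : f ≠ 1) :
    ∃ i x, f i x ≠ x ∧ ∀ j y, e (j, y) < e (i, x) → f j y = y := by
  have hne : {q : ι × β | f q.1 q.2 ≠ q.2}.Nonempty := by
    by_contra h
    refine hf (funext fun i ↦ OrderIso.ext (funext fun x ↦ ?_))
    by_contra hx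
    exact h ⟨(i, x), hx⟩
  obtain ⟨⟨i, x⟩, hx, hmin⟩ := (InvImage.wf e wellFounded_lt).has_min _ hne
  exact ⟨i, x, hx, fun j y hy ↦ not_not.mp fun h ↦ hmin (j, y) h hy⟩

variable {e : ι × β → ℕ}

theorem MovesUpFirst.mul (he : Injective e) {f g : ι → β ≃o β} (hf : MovesUpFirst e f)
    (hg : MovesUpFirst e g) : MovesUpFirst e (f * g) := by
  obtain ⟨i, x, hx, hfix⟩ := hf
  obtain ⟨j, y, hy, hgfix⟩ := hg
  have fix_mul : ∀ k z, e (k, z) < e (i, x) → e (k, z) < e (j, y) → (f * g) k z = z :=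
    fun k z h₁ h₂ ↦ by
      change f k (g k z) = z
      rw [hgfix k z h₂, hfix k z h₁]
  rcases lt_trichotomy (e (i, x)) (e (j, y)) with h | h | h
  · refine ⟨i, x, ?_, fun k z hz ↦ fix_mul k z hz (hz.trans h)⟩
    change x < f i (g i x)
    rwa [hgfix i x h]
  · obtain ⟨rfl, rfl⟩ := Prod.mk.inj (he h)
    exact ⟨i, x, hx.trans ((f i).strictMono hy), fun k z hz ↦ fix_mul k z hz (h ▸ hz)⟩
  · refine ⟨j, y, ?_, fun k z hz ↦ fix_mul k z (hz.trans h) hz⟩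
    calc y = f j y := (hfix j y h).symm
      _ < f j (g j y) := (f j).strictMono hy

theorem MovesUpFirst.not_inv (he : Injective e) {f : ι → β ≃o β} (hf : MovesUpFirst e f) :
    ¬ MovesUpFirst e f⁻¹ := by
  obtain ⟨i, x, hx, hfix⟩ := hf
  rintro ⟨j, y, hy, hfix'⟩
  change y < (f j).symm y at hy
  rw [OrderIso.lt_symm_apply] at hy
  rcases lt_trichotomy (e (i, x)) (e (j, y)) with h | h | h
  · have : (f i).symm x = x := hfix' i x h
    rw [OrderIso.symm_apply_eq] at this
    exact hx.ne this
  · obtain ⟨rfl, rfl⟩ := Prod.mk.inj (he h)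
    exact lt_asymm hx hy
  · exact hy.ne (hfix j y h)

theorem movesUpFirst_or_inv {f : ι → β ≃o β} (hf : f ≠ 1) :
    MovesUpFirst e f ∨ MovesUpFirst e f⁻¹ := by
  obtain ⟨i, x, hx, hfix⟩ := exists_first_moved e hf
  rcases hx.lt_or_gt with h | h
  · refine .inr ⟨i, x, (f i).lt_symm_apply.mpr h, fun j y hy ↦ ?_⟩
    exact (f j).symm_apply_eq.mpr (hfix j y hy).symm
  · exact .inl ⟨i, x, h, hfix⟩

open scoped Classical in
theorem isLeftOrderCone_movesUpFirst (he : Injective e) :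
    IsLeftOrderCone fun f : ι → β ≃o β ↦ decide (MovesUpFirst e f) :=
  isLeftOrderCone_decide (fun _ _ ↦ MovesUpFirst.mul he)
    (fun ⟨_, _, hx, _⟩ ↦ hx.ne rfl)
    (fun _ hf ↦ ⟨MovesUpFirst.not_inv he, (movesUpFirst_or_inv hf).resolve_right⟩)

theorem movesUpFirst_of_lt {f : ι → β ≃o β} {i : ι} {x : β} (h0 : e (i, x) = 0)
    (h : x < f i x) : MovesUpFirst e f :=
  ⟨i, x, h, fun _ _ hy ↦ absurd (h0 ▸ hy) (Nat.not_lt_zero _)⟩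

theorem not_movesUpFirst_of_lt (he : Injective e) {f : ι → β ≃o β} {i : ι} {x : β}
    (h0 : e (i, x) = 0) (h : f i x < x) : ¬ MovesUpFirst e f := by
  rintro ⟨j, y, hy, hfix⟩
  rcases eq_or_ne (j, y) (i, x) with hji | hji
  · obtain ⟨rfl, rfl⟩ := Prod.mk.inj hji
    exact lt_asymm h hy
  · refine h.ne (hfix i x ?_)
    rw [h0]
    exact Nat.pos_of_ne_zero fun h' ↦ hji (he (h'.trans h0.symm))

end MovesUpFirst

theorem lift_of_fin_two_eq_id : lift ![of 0, of 1] = MonoidHom.id (FreeGroup (Fin 2)) := by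
  rw [← FreeGroup.lift_of_eq_id]
  congr
  funext i
  fin_cases i <;> rfl

theorem exists_left_order_violating_word_general
    (w : FreeGroup (Fin 2)) (hsigns : HasBothSigns w) :
    ∃ P : FreeGroup (Fin 2) → Bool, IsLeftOrderCone P ∧
      P (FreeGroup.of 0) = true ∧ P (FreeGroup.of 1) = true ∧ P w⁻¹ = true ∧
      ¬ IsWOrder w P := by
  classical
  obtain ⟨F, hup, hdown⟩ := exists_lift_generators_pos_word_neg hsigns.2
  obtain ⟨ρ, hρ, hρF⟩ := exists_injective_pi_extending_lift F
  obtain ⟨e, he, he0⟩ :=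
    exists_injective_nat_eq_zero (Option {u : FreeGroup (Fin 2) // u ≠ 1} × ℚ) (none, 0)
  have hcone := (isLeftOrderCone_movesUpFirst he).comp hρ
  set P := (fun f ↦ decide (MovesUpFirst e f)) ∘ ρ
  have hgen : ∀ i, P (of i) = true := fun i ↦
    decide_eq_true (movesUpFirst_of_lt he0 (by simpa [hρF] using hup i))
  have hw : P w = false := decide_eq_false (not_movesUpFirst_of_lt he he0 (by rwa [hρF]))
  have hw1 : w⁻¹ ≠ 1 := inv_ne_one.mpr (by rintro rfl; simp at hdown)
  refine ⟨P, hcone, hgen 0, hgen 1, (hcone.2.2 w⁻¹ hw1).mpr (by rwa [inv_inv]),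
    fun hW ↦ ?_⟩
  have := hW _ _ (hgen 0) (hgen 1)
  rw [lift_of_fin_two_eq_id, MonoidHom.id_apply, hw] at this
  exact Bool.false_ne_true this

/-- For every nonempty reduced word `W` in two letters carrying both positive and
negative exponents, the free group `F₂ = ⟨a,b⟩` admits a left-order (given by its
positive cone `P`) with `a ≻ 1`, `b ≻ 1`, and `W(a,b) ≺ 1`; in particular, a left-order
that is not a `W`-order. -/
theorem exists_left_order_violating_word
    (w : FreeGroup (Fin 2)) (hw : w ≠ 1) (hsigns : HasBothSigns w) :
    ∃ P : FreeGroup (Fin 2) → Bool, IsLeftOrderCone P ∧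
      P (FreeGroup.of 0) = true ∧ P (FreeGroup.of 1) = true ∧ P w⁻¹ = true ∧
      ¬ IsWOrder w P :=
  exists_left_order_violating_word_general w hsigns
end

section
/- The group Diff^ω_+([0,1]) is residually solvable: for every element f ≠ id of Diff^ω_+([0,1]) there exist a solvable group S and a group homomorphism φ : Diff^ω_+([0,1]) → S with φ(f) ≠ 1. -/
/-!
Every element `σ` of `Diff^ω_+([0,1])` fixes `0`, so its analytic extension `F` satisfies
`F x = x + O(x)`. Let `N k` be the subgroup of those `σ` with `F x = x + O(x^(k+1))`. These are
normal subgroups, and the commutator of two elements of `N k` lies in `N (k+1)`: writing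
`F x = x + x^(k+1) u x` and `T x = x + x^(k+1) v x`, the difference `F ∘ T - T ∘ F` is `x^(k+1)`
times a function vanishing at `0`. Hence the `k`-th derived subgroup lies in `N k` and every
quotient by `N k` is solvable. Finally, an element lying in every `N k` has `F = id` near `0`,
hence on all of `[0,1]` by analytic continuation.
-/

open Filter Topology Asymptotics

/-- An element of the group of order-isomorphisms of `[0,1]` (equivalently, an
orientation-preserving homeomorphism of `[0,1]`, automatically fixing `0` and `1`)
is an orientation-preserving real-analytic diffeomorphism of `[0,1]` if both it and
its inverse extend to functions that are real-analytic on a neighborhood of `[0,1]`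
with nowhere-vanishing derivative on `[0,1]`. -/
def IsAnalyticDiffeo (σ : ↥(Set.Icc (0:ℝ) 1) ≃o ↥(Set.Icc (0:ℝ) 1)) : Prop :=
  ∃ F G : ℝ → ℝ,
    AnalyticOnNhd ℝ F (Set.Icc 0 1) ∧ AnalyticOnNhd ℝ G (Set.Icc 0 1) ∧
    (∀ x ∈ Set.Icc (0:ℝ) 1, deriv F x ≠ 0) ∧ (∀ x ∈ Set.Icc (0:ℝ) 1, deriv G x ≠ 0) ∧
    (∀ x : ↥(Set.Icc (0:ℝ) 1), (σ x : ℝ) = F x) ∧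
    (∀ x : ↥(Set.Icc (0:ℝ) 1), (σ.symm x : ℝ) = G x)

theorem Group.isSolvable_quotient_of_derivedSeries_le {G : Type*} [Group G] {N : Subgroup G}
    [N.Normal] {n : ℕ} (h : derivedSeries G n ≤ N) : IsSolvable (G ⧸ N) := by
  refine ⟨⟨n, ?_⟩⟩
  rw [← map_derivedSeries_eq (QuotientGroup.mk'_surjective N), Subgroup.map_eq_bot_iff,
    QuotientGroup.ker_mk']
  exact h

section AnalyticOrder

variable {𝕜 E : Type*} [NontriviallyNormedField 𝕜] [NormedAddCommGroup E] [NormedSpace 𝕜 E]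
  {f : 𝕜 → E} {z₀ : 𝕜} {n : ℕ}

theorem AnalyticAt.isBigO_pow_of_natCast_le_analyticOrderAt (hf : AnalyticAt 𝕜 f z₀)
    (hn : n ≤ analyticOrderAt f z₀) : f =O[𝓝 z₀] fun z => (z - z₀) ^ n := by
  obtain ⟨g, hg, hfg⟩ := (natCast_le_analyticOrderAt hf).mp hn
  have hg1 : g =O[𝓝 z₀] fun _ => (1 : 𝕜) := hg.continuousAt.tendsto.isBigO_one 𝕜
  exact ((isBigO_refl (fun z => (z - z₀) ^ n) _).smul hg1).congr'
    (hfg.mono fun z hz => hz.symm) (by simp)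

theorem AnalyticAt.natCast_le_analyticOrderAt_of_isBigO (hf : AnalyticAt 𝕜 f z₀)
    (h : f =O[𝓝 z₀] fun z => (z - z₀) ^ n) : n ≤ analyticOrderAt f z₀ := by
  by_contra! hlt
  obtain ⟨m, hm⟩ := ENat.ne_top_iff_exists.mp hlt.ne_top
  rw [← hm, Nat.cast_lt] at hlt
  obtain ⟨g, hg, hg0, hfg⟩ := hf.analyticOrderAt_eq_natCast.mp hm.symm
  -- on the punctured neighbourhood, `g = (z - z₀)⁻ᵐ • f = O((z - z₀) ^ (n - m))` tends to `0`
  have hne : ∀ᶠ z in 𝓝[≠] z₀, z - z₀ ≠ 0 := by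
    filter_upwards [self_mem_nhdsWithin] with z hz using sub_ne_zero.mpr hz
  have hgO : g =O[𝓝[≠] z₀] fun z => (z - z₀) ^ (n - m) := by
    have := (isBigO_refl (fun z => ((z - z₀) ^ m)⁻¹) (𝓝[≠] z₀)).smul (h.mono nhdsWithin_le_nhds)
    refine this.congr' ?_ ?_
    · filter_upwards [hne, hfg.filter_mono nhdsWithin_le_nhds] with z hz hfz
      rw [hfz, smul_smul, inv_mul_cancel₀ (pow_ne_zero _ hz), one_smul]
    · filter_upwards [hne] with z hz
      rw [smul_eq_mul, pow_sub₀ _ hz hlt.le, mul_comm]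
  have hlim : Tendsto (fun z => (z - z₀) ^ (n - m)) (𝓝[≠] z₀) (𝓝 0) := by
    have : ContinuousAt (fun z => (z - z₀) ^ (n - m)) z₀ := by fun_prop
    simpa [Nat.sub_ne_zero_of_lt hlt] using this.tendsto.mono_left nhdsWithin_le_nhds
  exact hg0 (tendsto_nhds_unique (hg.continuousAt.tendsto.mono_left nhdsWithin_le_nhds)
    (hgO.trans_tendsto hlim))

theorem AnalyticAt.analyticOrderAt_le_comp {g : 𝕜 → 𝕜} (hf : AnalyticAt 𝕜 f (g z₀))
    (hg : AnalyticAt 𝕜 g z₀) : analyticOrderAt f (g z₀) ≤ analyticOrderAt (f ∘ g) z₀ := by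
  rw [hf.analyticOrderAt_comp hg]
  refine le_mul_of_one_le_right' (Order.one_le_iff_ne_zero.mpr ?_)
  exact analyticOrderAt_ne_zero.mpr ⟨by fun_prop, sub_self _⟩

-- An analytic `T` is locally Lipschitz, so `T (F z) - T z = O(F z - z)`.
theorem AnalyticAt.analyticOrderAt_sub_id_le_comp_sub {F : 𝕜 → 𝕜} {T : 𝕜 → E}
    (hF : AnalyticAt 𝕜 F z₀) (hT : AnalyticAt 𝕜 T z₀) (hFz₀ : F z₀ = z₀) :
    analyticOrderAt (F - id) z₀ ≤ analyticOrderAt (T ∘ F - T) z₀ := by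
  have hT' : AnalyticAt 𝕜 T (F z₀) := by rwa [hFz₀]
  rw [← ENat.forall_natCast_le_iff_le]
  intro n hn
  refine ((hT'.comp hF).sub hT).natCast_le_analyticOrderAt_of_isBigO ?_
  have hpair : Tendsto (fun z => (F z, z)) (𝓝 z₀) (𝓝 (z₀, z₀)) := by
    simpa [hFz₀] using hF.continuousAt.tendsto.prodMk_nhds tendsto_id
  exact (hT.hasStrictFDerivAt.isBigO_sub.comp_tendsto hpair).trans
    ((hF.sub analyticAt_id).isBigO_pow_of_natCast_le_analyticOrderAt hn)

variable {F T Fi Ti : 𝕜 → 𝕜}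

theorem exists_eventually_eq_add_pow_mul {k : ℕ} (hF : AnalyticAt 𝕜 F 0)
    (hFk : k ≤ analyticOrderAt (F - id) 0) :
    ∃ u, AnalyticAt 𝕜 u 0 ∧ ∀ᶠ x in 𝓝 0, F x = x + x ^ k * u x := by
  obtain ⟨u, hu, hFu⟩ := (natCast_le_analyticOrderAt (hF.sub analyticAt_id)).mp hFk
  refine ⟨u, hu, ?_⟩
  filter_upwards [hFu] with x hx
  simp only [Pi.sub_apply, id, sub_zero, smul_eq_mul] at hx
  linear_combination hx

theorem le_analyticOrderAt_comp_sub_id (hF : AnalyticAt 𝕜 F 0) (hT : AnalyticAt 𝕜 T 0)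
    (hT0 : T 0 = 0) :
    min (analyticOrderAt (F - id) 0) (analyticOrderAt (T - id) 0) ≤
      analyticOrderAt (F ∘ T - id) 0 := by
  have hFT : AnalyticAt 𝕜 (F - id) (T 0) := by rw [hT0]; exact hF.sub analyticAt_id
  have hsplit : F ∘ T - id = (F - id) ∘ T + (T - id) := by ext; simp
  rw [hsplit]
  refine le_trans (min_le_min_right _ ?_) le_analyticOrderAt_add
  simpa only [hT0] using hFT.analyticOrderAt_le_comp hT

theorem analyticOrderAt_sub_id_le_of_rightInverse (hF : AnalyticAt 𝕜 F 0)
    (hFi : AnalyticAt 𝕜 Fi 0) (hFi0 : Fi 0 = 0) (hinv : F ∘ Fi =ᶠ[𝓝 0] id) :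
    analyticOrderAt (F - id) 0 ≤ analyticOrderAt (Fi - id) 0 := by
  have hFFi : AnalyticAt 𝕜 (F - id) (Fi 0) := by rw [hFi0]; exact hF.sub analyticAt_id
  have hsplit : Fi - id =ᶠ[𝓝 0] -((F - id) ∘ Fi) := by
    filter_upwards [hinv] with x hx
    simp only [Function.comp_apply, id] at hx
    simp [hx]
  rw [analyticOrderAt_congr hsplit, analyticOrderAt_neg]
  simpa only [hFi0] using hFFi.analyticOrderAt_le_comp hFi

theorem analyticOrderAt_sub_id_le_conj (hF : AnalyticAt 𝕜 F 0) (hT : AnalyticAt 𝕜 T 0)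
    (hTi : AnalyticAt 𝕜 Ti 0) (hF0 : F 0 = 0) (hTi0 : Ti 0 = 0) (hinv : T ∘ Ti =ᶠ[𝓝 0] id) :
    analyticOrderAt (F - id) 0 ≤ analyticOrderAt (T ∘ F ∘ Ti - id) 0 := by
  have hTF : AnalyticAt 𝕜 (T ∘ F - T) (Ti 0) := by
    rw [hTi0]; exact (hT.comp_of_eq hF hF0).sub hT
  have hsplit : T ∘ F ∘ Ti - id =ᶠ[𝓝 0] (T ∘ F - T) ∘ Ti := by
    filter_upwards [hinv] with x hx
    simp only [Function.comp_apply, id] at hx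
    simp [hx]
  rw [analyticOrderAt_congr hsplit]
  calc analyticOrderAt (F - id) 0 ≤ analyticOrderAt (T ∘ F - T) 0 :=
        hF.analyticOrderAt_sub_id_le_comp_sub hT hF0
    _ ≤ analyticOrderAt ((T ∘ F - T) ∘ Ti) 0 := by
        simpa only [hTi0] using hTF.analyticOrderAt_le_comp hTi

theorem natCast_le_analyticOrderAt_comp_sub_comp {k : ℕ} (hF : AnalyticAt 𝕜 F 0)
    (hT : AnalyticAt 𝕜 T 0) (hFk : (k + 1 : ℕ) ≤ analyticOrderAt (F - id) 0)
    (hTk : (k + 1 : ℕ) ≤ analyticOrderAt (T - id) 0) :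
    (k + 2 : ℕ) ≤ analyticOrderAt (F ∘ T - T ∘ F) 0 := by
  obtain ⟨u, hu, hFu⟩ := exists_eventually_eq_add_pow_mul hF hFk
  obtain ⟨v, hv, hTv⟩ := exists_eventually_eq_add_pow_mul hT hTk
  have hF0 : F 0 = 0 := by simpa using hFu.self_of_nhds
  have hT0 : T 0 = 0 := by simpa using hTv.self_of_nhds
  set g : 𝕜 → 𝕜 := fun x => v x - u x + (1 + x ^ k * v x) ^ (k + 1) * u (T x) -
    (1 + x ^ k * u x) ^ (k + 1) * v (F x) with hg_def
  have hg : AnalyticAt 𝕜 g 0 := by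
    have hu' : AnalyticAt 𝕜 u (T 0) := by rwa [hT0]
    have hv' : AnalyticAt 𝕜 v (F 0) := by rwa [hF0]
    fun_prop
  -- for `k = 0` the cross terms `v 0 * u 0` cancel: linear parts commute
  have hg0 : g 0 = 0 := by
    rcases k with _ | k
    · simp [hg_def, hF0, hT0]; ring
    · simp [hg_def, hF0, hT0]
  have hcomm : F ∘ T - T ∘ F =ᶠ[𝓝 0] (fun x => x ^ (k + 1)) * g := by
    have hTlim : Tendsto T (𝓝 0) (𝓝 0) := by simpa [hT0] using hT.continuousAt.tendsto
    have hFlim : Tendsto F (𝓝 0) (𝓝 0) := by simpa [hF0] using hF.continuousAt.tendsto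
    filter_upwards [hFu, hTv, hTlim.eventually hFu, hFlim.eventually hTv] with x hFx hTx hFTx hTFx
    have hTx' : T x = x * (1 + x ^ k * v x) := by rw [hTx]; ring
    have hFx' : F x = x * (1 + x ^ k * u x) := by rw [hFx]; ring
    simp only [Pi.sub_apply, Pi.mul_apply, Function.comp_apply, hg_def]
    rw [hFTx, hTFx, hTx', hFx', mul_pow, mul_pow]
    ring
  have hpow : analyticOrderAt (fun x : 𝕜 => x ^ (k + 1)) 0 = (k + 1 : ℕ) := by
    convert analyticOrderAt_centeredMonomial (z₀ := (0 : 𝕜)) (n := k + 1) using 2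
    ext; simp
  have hg1 : 1 ≤ analyticOrderAt g 0 :=
    Order.one_le_iff_ne_zero.mpr (hg.analyticOrderAt_ne_zero.mpr hg0)
  rw [analyticOrderAt_congr hcomm, analyticOrderAt_mul (by fun_prop) hg, hpow]
  calc ((k + 2 : ℕ) : ℕ∞) = (k + 1 : ℕ) + 1 := by push_cast; ring
    _ ≤ (k + 1 : ℕ) + analyticOrderAt g 0 := by gcongr

theorem natCast_le_analyticOrderAt_commutator_sub_id {k : ℕ} (hF : AnalyticAt 𝕜 F 0)
    (hT : AnalyticAt 𝕜 T 0) (hFi : AnalyticAt 𝕜 Fi 0) (hTi : AnalyticAt 𝕜 Ti 0)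
    (hFi0 : Fi 0 = 0) (hTi0 : Ti 0 = 0) (hFinv : F ∘ Fi =ᶠ[𝓝 0] id)
    (hTinv : T ∘ Ti =ᶠ[𝓝 0] id) (hFk : (k + 1 : ℕ) ≤ analyticOrderAt (F - id) 0)
    (hTk : (k + 1 : ℕ) ≤ analyticOrderAt (T - id) 0) :
    (k + 2 : ℕ) ≤ analyticOrderAt (F ∘ T ∘ Fi ∘ Ti - id) 0 := by
  have hF0 : F 0 = 0 := sub_eq_zero.mp <| apply_eq_zero_of_analyticOrderAt_ne_zero (f := F - id)
    ((Nat.cast_pos.mpr k.succ_pos).trans_le hFk).ne'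
  have hT0 : T 0 = 0 := sub_eq_zero.mp <| apply_eq_zero_of_analyticOrderAt_ne_zero (f := T - id)
    ((Nat.cast_pos.mpr k.succ_pos).trans_le hTk).ne'
  have hw0 : (Fi ∘ Ti) 0 = 0 := by simp [hTi0, hFi0]
  have hcomm : AnalyticAt 𝕜 (F ∘ T - T ∘ F) ((Fi ∘ Ti) 0) := by
    rw [hw0]; exact (hF.comp_of_eq hT hT0).sub (hT.comp_of_eq hF hF0)
  -- `T ∘ F` undoes `Fi ∘ Ti`, so the commutator minus `id` is `F ∘ T - T ∘ F` along `Fi ∘ Ti`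
  have hsplit : F ∘ T ∘ Fi ∘ Ti - id =ᶠ[𝓝 0] (F ∘ T - T ∘ F) ∘ (Fi ∘ Ti) := by
    have hTilim : Tendsto Ti (𝓝 0) (𝓝 0) := by simpa [hTi0] using hTi.continuousAt.tendsto
    filter_upwards [hTinv, hTilim.eventually hFinv] with x hTx hFx
    simp only [Function.comp_apply, id] at hTx hFx
    simp [hTx, hFx]
  rw [analyticOrderAt_congr hsplit]
  refine (natCast_le_analyticOrderAt_comp_sub_comp hF hT hFk hTk).trans ?_
  simpa only [hw0] using hcomm.analyticOrderAt_le_comp (hFi.comp_of_eq hTi hTi0)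

end AnalyticOrder

theorem AnalyticAt.eventuallyEq_of_eventuallyEq_nhdsGT {E : Type*} [NormedAddCommGroup E]
    [NormedSpace ℝ E] {f g : ℝ → E} {a : ℝ} (hf : AnalyticAt ℝ f a) (hg : AnalyticAt ℝ g a)
    (h : f =ᶠ[𝓝[>] a] g) : f =ᶠ[𝓝 a] g :=
  (hf.frequently_eq_iff_eventually_eq hg).mp (h.frequently.filter_mono (nhdsGT_le_nhdsNE a))

namespace DiffOmega

def IsAnalyticExtension (F : ℝ → ℝ) (σ : unitInterval ≃o unitInterval) : Prop :=
  AnalyticAt ℝ F 0 ∧ ∀ x : unitInterval, (σ x : ℝ) = F x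

variable {σ τ : unitInterval ≃o unitInterval} {F G T : ℝ → ℝ}

theorem isAnalyticExtension_id : IsAnalyticExtension id (1 : unitInterval ≃o unitInterval) :=
  ⟨analyticAt_id, fun _ => rfl⟩

namespace IsAnalyticExtension

theorem apply_zero (h : IsAnalyticExtension F σ) : F 0 = 0 := by
  simpa using (h.2 ⊥).symm

theorem comp (hF : IsAnalyticExtension F σ) (hT : IsAnalyticExtension T τ) :
    IsAnalyticExtension (F ∘ T) (σ * τ) :=
  ⟨hF.1.comp_of_eq hT.1 hT.apply_zero, fun x => (hF.2 (τ x)).trans (congrArg F (hT.2 x))⟩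

theorem eventuallyEq (hF : IsAnalyticExtension F σ) (hG : IsAnalyticExtension G σ) :
    F =ᶠ[𝓝 0] G := by
  refine hF.1.eventuallyEq_of_eventuallyEq_nhdsGT hG.1 ?_
  filter_upwards [Icc_mem_nhdsGT one_pos] with x hx
  exact (hF.2 ⟨x, hx⟩).symm.trans (hG.2 ⟨x, hx⟩)

theorem comp_eventuallyEq_id (hF : IsAnalyticExtension F σ) (hG : IsAnalyticExtension G σ⁻¹) :
    F ∘ G =ᶠ[𝓝 0] id := by
  have h := hF.comp hG
  rw [mul_inv_cancel] at h
  exact h.eventuallyEq isAnalyticExtension_id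

end IsAnalyticExtension

def analyticAtZeroSubgroup : Subgroup (unitInterval ≃o unitInterval) where
  carrier := {σ | (∃ F, IsAnalyticExtension F σ) ∧ ∃ F, IsAnalyticExtension F σ⁻¹}
  one_mem' := ⟨⟨id, isAnalyticExtension_id⟩, ⟨id, by simpa using isAnalyticExtension_id⟩⟩
  mul_mem' := by
    rintro σ τ ⟨⟨F, hF⟩, ⟨Fi, hFi⟩⟩ ⟨⟨T, hT⟩, ⟨Ti, hTi⟩⟩
    exact ⟨⟨F ∘ T, hF.comp hT⟩, ⟨Ti ∘ Fi, by simpa only [mul_inv_rev] using hTi.comp hFi⟩⟩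
  inv_mem' := by
    rintro σ ⟨hσ, hσinv⟩
    exact ⟨hσinv, by simpa only [inv_inv] using hσ⟩

theorem mem_analyticAtZeroSubgroup_of_isAnalyticDiffeo (h : IsAnalyticDiffeo σ) :
    σ ∈ analyticAtZeroSubgroup := by
  obtain ⟨F, Fi, hF, hFi, -, -, hFσ, hFiσ⟩ := h
  exact ⟨⟨F, hF 0 unitInterval.zero_mem, hFσ⟩, ⟨Fi, hFi 0 unitInterval.zero_mem, hFiσ⟩⟩

-- `F x = x + O(x^(k+1))`: the `k`-jet of `σ` at `0` is that of the identity.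
def tangentSubgroup (k : ℕ) : Subgroup analyticAtZeroSubgroup where
  carrier := {σ | ∃ F, IsAnalyticExtension F σ ∧ (k + 1 : ℕ) ≤ analyticOrderAt (F - id) 0}
  one_mem' := by
    refine ⟨id, isAnalyticExtension_id, le_top.trans_eq (analyticOrderAt_eq_top.mpr ?_).symm⟩
    exact Eventually.of_forall fun _ => sub_self _
  mul_mem' := by
    rintro σ τ ⟨F, hF, hFk⟩ ⟨T, hT, hTk⟩
    exact ⟨F ∘ T, hF.comp hT,
      (le_min hFk hTk).trans (le_analyticOrderAt_comp_sub_id hF.1 hT.1 hT.apply_zero)⟩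
  inv_mem' := by
    rintro σ ⟨F, hF, hFk⟩
    obtain ⟨Fi, hFi⟩ := σ.2.2
    exact ⟨Fi, hFi, hFk.trans (analyticOrderAt_sub_id_le_of_rightInverse hF.1 hFi.1
      hFi.apply_zero (hF.comp_eventuallyEq_id hFi))⟩

theorem mem_tangentSubgroup_iff {k : ℕ} {σ : analyticAtZeroSubgroup}
    (hF : IsAnalyticExtension F σ) :
    σ ∈ tangentSubgroup k ↔ (k + 1 : ℕ) ≤ analyticOrderAt (F - id) 0 := by
  refine ⟨fun ⟨G, hG, hGk⟩ => ?_, fun hFk => ⟨F, hF, hFk⟩⟩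
  rwa [analyticOrderAt_congr ((hG.eventuallyEq hF).sub EventuallyEq.rfl)] at hGk

instance (k : ℕ) : (tangentSubgroup k).Normal where
  conj_mem := by
    rintro σ ⟨F, hF, hFk⟩ τ
    obtain ⟨⟨T, hT⟩, ⟨Ti, hTi⟩⟩ := τ.2
    exact ⟨T ∘ F ∘ Ti, (hT.comp hF).comp hTi, hFk.trans (analyticOrderAt_sub_id_le_conj hF.1
      hT.1 hTi.1 hF.apply_zero hTi.apply_zero (hT.comp_eventuallyEq_id hTi))⟩

theorem derivedSeries_le_tangentSubgroup (n : ℕ) :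
    derivedSeries analyticAtZeroSubgroup n ≤ tangentSubgroup n := by
  induction n with
  | zero =>
    rintro σ -
    obtain ⟨⟨F, hF⟩, -⟩ := σ.2
    refine ⟨F, hF, Order.one_le_iff_ne_zero.mpr (analyticOrderAt_ne_zero.mpr ⟨?_, ?_⟩)⟩
    · exact hF.1.sub analyticAt_id
    · simp [hF.apply_zero]
  | succ n ih =>
    rw [derivedSeries_succ, Subgroup.commutator_le]
    intro σ hσ τ hτ
    obtain ⟨⟨F, hF⟩, ⟨Fi, hFi⟩⟩ := σ.2
    obtain ⟨⟨T, hT⟩, ⟨Ti, hTi⟩⟩ := τ.2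
    exact ⟨F ∘ T ∘ Fi ∘ Ti, ((hF.comp hT).comp hFi).comp hTi,
      natCast_le_analyticOrderAt_commutator_sub_id hF.1 hT.1 hFi.1 hTi.1 hFi.apply_zero
        hTi.apply_zero (hF.comp_eventuallyEq_id hFi) (hT.comp_eventuallyEq_id hTi)
        ((mem_tangentSubgroup_iff hF).mp (ih hσ)) ((mem_tangentSubgroup_iff hT).mp (ih hτ))⟩

theorem eq_one_of_forall_mem_tangentSubgroup {σ : analyticAtZeroSubgroup}
    (hσ : IsAnalyticDiffeo σ) (h : ∀ k, σ ∈ tangentSubgroup k) : σ = 1 := by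
  obtain ⟨F, -, hFan, -, -, -, hFσ, -⟩ := hσ
  have hF : IsAnalyticExtension F σ := ⟨hFan 0 unitInterval.zero_mem, hFσ⟩
  have htop : analyticOrderAt (F - id) 0 = ⊤ := ENat.eq_top_iff_forall_ge.mpr fun k =>
    (Nat.cast_le.mpr k.le_succ).trans ((mem_tangentSubgroup_iff hF).mp (h k))
  have hFid : F =ᶠ[𝓝 0] id := by
    filter_upwards [analyticOrderAt_eq_top.mp htop] with x hx
    exact sub_eq_zero.mp hx
  have hEq := hFan.eqOn_of_preconnected_of_eventuallyEq analyticOnNhd_id isPreconnected_Icc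
    unitInterval.zero_mem hFid
  ext x
  exact (hFσ x).trans (hEq x.2)

end DiffOmega

/-- `Diff^ω_+([0,1])` (formalized as the subgroup of order-isomorphisms of `[0,1]`
whose carrier consists exactly of the real-analytic diffeomorphisms) is residually
solvable: every nontrivial element survives in some solvable quotient. -/
theorem diffOmega_residually_solvable
    (G : Subgroup (↥(Set.Icc (0:ℝ) 1) ≃o ↥(Set.Icc (0:ℝ) 1)))
    (hG : ∀ σ, σ ∈ G ↔ IsAnalyticDiffeo σ) :
    ∀ f : ↥G, f ≠ 1 →
      ∃ (S : Type) (_ : Group S), IsSolvable S ∧ ∃ φ : ↥G →* S, φ f ≠ 1 := by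
  intro f hf
  have hGA : G ≤ DiffOmega.analyticAtZeroSubgroup := fun σ hσ =>
    DiffOmega.mem_analyticAtZeroSubgroup_of_isAnalyticDiffeo ((hG σ).mp hσ)
  let ι := Subgroup.inclusion hGA
  obtain ⟨k, hk⟩ : ∃ k, ι f ∉ DiffOmega.tangentSubgroup k := by
    by_contra! h
    exact hf (Subgroup.inclusion_injective hGA
      (DiffOmega.eq_one_of_forall_mem_tangentSubgroup ((hG f).mp f.2) h))
  refine ⟨_ ⧸ DiffOmega.tangentSubgroup k, inferInstance,
    Group.isSolvable_quotient_of_derivedSeries_le (DiffOmega.derivedSeries_le_tangentSubgroup k),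
    (QuotientGroup.mk' _).comp ι, ?_⟩
  simpa [QuotientGroup.eq_one_iff] using hk
end

section
/- If a group Γ satisfies a nontrivial law, then it satisfies a nontrivial law in two letters: if there exist n ≥ 1 and a nontrivial element w of the free group F_n on n generators such that φ(w) = 1 for every homomorphism φ : F_n → Γ, then there exists a nontrivial element w' of the free group F₂ on two generators such that ψ(w') = 1 for every homomorphism ψ : F₂ → Γ. -/
/-!
Send the `i`-th generator of `F_n` to `b ^ i * a * b⁻¹ ^ i` in `F₂ = ⟨a, b⟩`. This map is injective:
composed with the map `F₂ → F(ℤ) ⋊ ℤ`, `a ↦ x₀`, `b ↦ 1`, where `ℤ` acts by shifting the generators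
`x_k` of `F(ℤ)`, it becomes the inclusion `x_i ↦ x_i`. The image of a nontrivial law is therefore a
nontrivial law in two letters.
-/

open Function

namespace FreeGroup

def shiftAut : Multiplicative ℤ →* MulAut (FreeGroup ℤ) where
  toFun m := freeGroupCongr (Equiv.addRight m.toAdd)
  map_one' := by ext; simp
  map_mul' m m' := by
    ext x
    simp only [MulAut.mul_apply, freeGroupCongr_apply, map.comp]
    congr 1
    ext
    simp [add_comm]

@[simp]
lemma shiftAut_of (m : Multiplicative ℤ) (k : ℤ) : shiftAut m (of k) = of (k + m.toAdd) := by
  simp [shiftAut]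

def conjPowersHom {G : Type*} [Group G] (a t : G) : FreeGroup ℤ →* G :=
  lift fun k => t ^ k * a * (t ^ k)⁻¹

open SemidirectProduct in
lemma injective_conjPowersHom_of_zero_of_one :
    Injective (conjPowersHom (of 0 : FreeGroup (Fin 2)) (of 1)) := by
  let π : FreeGroup (Fin 2) →* FreeGroup ℤ ⋊[shiftAut] Multiplicative ℤ :=
    lift ![inl (of 0), inr (.ofAdd 1)]
  have hπ : π.comp (conjPowersHom (of 0) (of 1)) = inl := by
    refine ext_hom _ _ fun k => ?_
    have hb : π (of 1 ^ k) = inr (.ofAdd k) := by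
      rw [map_zpow, show π (of 1) = inr (.ofAdd 1) from lift_apply_of, ← map_zpow, ← Int.ofAdd_mul,
        one_mul]
    calc π (conjPowersHom (of 0) (of 1) (of k))
        = inr (.ofAdd k) * inl (of 0) * inr (.ofAdd k)⁻¹ := by
          simp [π, conjPowersHom, hb]
      _ = inl (of k) := by rw [← inl_aut]; simp
  refine .of_comp (f := π) ?_
  rw [← MonoidHom.coe_comp, hπ]
  exact inl_injective

end FreeGroup

open FreeGroup

theorem law_in_two_letters_general
    {Γ : Type*} [Group Γ] (n : ℕ)
    (w : FreeGroup (Fin n)) (hw : w ≠ 1)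
    (hlaw : ∀ φ : FreeGroup (Fin n) →* Γ, φ w = 1) :
    ∃ w' : FreeGroup (Fin 2), w' ≠ 1 ∧ ∀ ψ : FreeGroup (Fin 2) →* Γ, ψ w' = 1 := by
  let ι := (conjPowersHom (of 0 : FreeGroup (Fin 2)) (of 1)).comp (map fun i : Fin n => (i : ℤ))
  have hι : Injective ι := injective_conjPowersHom_of_zero_of_one.comp <|
    map_injective (Nat.cast_injective.comp Fin.val_injective)
  exact ⟨ι w, (map_ne_one_iff ι hι).2 hw, fun ψ => hlaw (ψ.comp ι)⟩

/-- If a group satisfies a nontrivial law in `n ≥ 1` letters, then it satisfies a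
nontrivial law in two letters. -/
theorem law_in_two_letters
    {Γ : Type*} [Group Γ] (n : ℕ) (hn : 1 ≤ n)
    (w : FreeGroup (Fin n)) (hw : w ≠ 1)
    (hlaw : ∀ φ : FreeGroup (Fin n) →* Γ, φ w = 1) :
    ∃ w' : FreeGroup (Fin 2), w' ≠ 1 ∧ ∀ ψ : FreeGroup (Fin 2) →* Γ, ψ w' = 1 :=
  law_in_two_letters_general n w hw hlaw
end

section
/- Let Γ be a group of orientation-preserving homeomorphisms of the real line without a global fixed point, and suppose there exists a nonempty, closed, discrete subset K of ℝ that is invariant under every element of Γ. Then Γ admits a surjective group homomorphism onto ℤ. -/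
/-!
If `K` were bounded above, `sSup K` would be fixed by every `g ∈ Γ` (as `g '' K = K`), and
likewise for `sInf K`; so `K` is unbounded in both directions. Being closed and discrete, `K`
meets every compact interval in a finite set, hence is a locally finite linear order without
endpoints, i.e. order-isomorphic to `ℤ`. Restricting to `K ≅ ℤ` turns `Γ` into a group of order
automorphisms of `ℤ`, which are translations; the translation amount is a homomorphism `Γ → ℤ`.
It is nonzero, since otherwise every point of `K` is a global fixed point, and its image, a
nonzero subgroup of `ℤ`, is again infinite cyclic.
-/

open Set

theorem isDiscrete_of_forall_abs_sub_lt {K : Set ℝ}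
    (hK : ∀ x ∈ K, ∃ ε > (0:ℝ), ∀ y ∈ K, |y - x| < ε → y = x) : IsDiscrete K := by
  refine isDiscrete_iff_forall_mem_exists_isOpen.mpr fun x hx => ?_
  obtain ⟨ε, hε, hεK⟩ := hK x hx
  refine ⟨Metric.ball x ε, Metric.isOpen_ball, ?_⟩
  ext y
  simp only [mem_inter_iff, Metric.mem_ball, Real.dist_eq, mem_singleton_iff]
  exact ⟨fun ⟨hy, hyK⟩ => hεK y hyK hy, by rintro rfl; simpa using ⟨hε, hx⟩⟩

theorem IsClosed.finite_inter_Icc_of_isDiscrete {α : Type*} [TopologicalSpace α] [Preorder α]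
    [CompactIccSpace α] {K : Set α} (hcl : IsClosed K) (hd : IsDiscrete K) (a b : α) :
    (K ∩ Icc a b).Finite :=
  (isCompact_Icc.inter_left hcl).finite (hd.mono inter_subset_left)

theorem nonempty_orderIso_int_of_isClosed_of_isDiscrete {α : Type*} [TopologicalSpace α]
    [LinearOrder α] [CompactIccSpace α] {K : Set α} (hne : K.Nonempty) (hcl : IsClosed K)
    (hd : IsDiscrete K) (hK₁ : ¬BddAbove K) (hK₂ : ¬BddBelow K) : Nonempty (K ≃o ℤ) := by
  let _ : LocallyFiniteOrder K := LocallyFiniteOrder.ofFiniteIcc fun a b =>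
    ((hcl.finite_inter_Icc_of_isDiscrete hd a b).preimage Subtype.val_injective.injOn).subset
      fun x hx => ⟨x.2, hx⟩
  let _ := LinearLocallyFiniteOrder.succOrder K
  let _ := LinearLocallyFiniteOrder.predOrder K
  have : NoMaxOrder K := ⟨fun x => by
    obtain ⟨y, hy, hxy⟩ := not_bddAbove_iff.mp hK₁ x
    exact ⟨⟨y, hy⟩, hxy⟩⟩
  have : NoMinOrder K := ⟨fun x => by
    obtain ⟨y, hy, hxy⟩ := not_bddBelow_iff.mp hK₂ x
    exact ⟨⟨y, hy⟩, hxy⟩⟩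
  have := hne.to_subtype
  exact ⟨orderIsoIntOfLinearSuccPredArch⟩

section Invariant

variable {α : Type*} [ConditionallyCompleteLattice α] {Γ : Subgroup (α ≃o α)} {K : Set α}

theorem not_bddAbove_of_forall_image_eq (hnofix : ¬ ∃ x : α, ∀ g ∈ Γ, g x = x)
    (hne : K.Nonempty) (hinv : ∀ g ∈ Γ, ⇑g '' K = K) : ¬BddAbove K := fun hbdd =>
  hnofix ⟨sSup K, fun g hg => by rw [g.map_csSup' hne hbdd, hinv g hg]⟩

theorem not_bddBelow_of_forall_image_eq (hnofix : ¬ ∃ x : α, ∀ g ∈ Γ, g x = x)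
    (hne : K.Nonempty) (hinv : ∀ g ∈ Γ, ⇑g '' K = K) : ¬BddBelow K := fun hbdd =>
  hnofix ⟨sInf K, fun g hg => by rw [g.map_csInf' hne hbdd, hinv g hg]⟩

end Invariant

theorem OrderIso.mem_iff_apply_mem_of_image_eq {α : Type*} [Preorder α] (g : α ≃o α) {K : Set α}
    (hK : ⇑g '' K = K) (x : α) : x ∈ K ↔ g x ∈ K := by
  conv_rhs => rw [← hK]
  exact g.injective.mem_set_image.symm

def Subgroup.restrictOrderIsoHom {α : Type*} [Preorder α] (Γ : Subgroup (α ≃o α)) (K : Set α)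
    (hK : ∀ g ∈ Γ, ⇑g '' K = K) : Γ →* (K ≃o K) where
  toFun g :=
    { toEquiv := g.1.toEquiv.subtypeEquiv (g.1.mem_iff_apply_mem_of_image_eq (hK g g.2))
      map_rel_iff' := g.1.le_iff_le }
  map_one' := rfl
  map_mul' _ _ := rfl

def OrderIso.autCongr {α β : Type*} [Preorder α] [Preorder β] (e : α ≃o β) :
    (α ≃o α) ≃* (β ≃o β) where
  toEquiv := e.orderIsoCongr e
  map_mul' f g := by ext; simp [RelIso.mul_apply]

theorem Int.orderIso_apply_eq_apply_zero_add (f : ℤ ≃o ℤ) (n : ℤ) : f n = f 0 + n := by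
  induction n using Int.induction_on with
  | zero => simp
  | succ k ih =>
    rw [← Order.succ_eq_add_one, f.map_succ, ih, Order.succ_eq_add_one, Order.succ_eq_add_one,
      add_assoc]
  | pred k ih =>
    have := f.map_pred (-(k : ℤ))
    rw [Order.pred_eq_sub_one, Order.pred_eq_sub_one, ih] at this
    rw [this, add_sub_assoc]

def Int.translationHom : (ℤ ≃o ℤ) →* Multiplicative ℤ where
  toFun f := Multiplicative.ofAdd (f 0)
  map_one' := rfl
  map_mul' f g := by
    rw [RelIso.mul_apply, Int.orderIso_apply_eq_apply_zero_add f (g 0)]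
    rfl

theorem Int.translationHom_injective : Function.Injective Int.translationHom := fun f g h => by
  ext n
  rw [Int.orderIso_apply_eq_apply_zero_add f, Int.orderIso_apply_eq_apply_zero_add g]
  exact congrArg (· + n) h

theorem MonoidHom.exists_surjective_of_ne_one {G : Type*} [Group G] {f : G →* Multiplicative ℤ}
    (hf : f ≠ 1) : ∃ φ : G →* Multiplicative ℤ, Function.Surjective φ := by
  obtain ⟨g, hg⟩ := DFunLike.ne_iff.mp hf
  have : Infinite f.range := Set.Infinite.to_subtype <|
    (infinite_zpowers.mpr (not_isOfFinOrder_of_isMulTorsionFree hg)).mono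
      (Subgroup.zpowers_le.mpr ⟨g, rfl⟩)
  exact ⟨intCyclicMulEquiv.symm.toMonoidHom.comp f.rangeRestrict,
    intCyclicMulEquiv.symm.surjective.comp f.rangeRestrict_surjective⟩

/-- A group of orientation-preserving homeomorphisms of the real line (formalized as
order-isomorphisms of `ℝ`) without a global fixed point that preserves a nonempty,
closed, discrete subset `K ⊆ ℝ` admits a surjective homomorphism onto `ℤ`. -/
theorem surjects_onto_int_of_invariant_discrete_set
    (Γ : Subgroup (ℝ ≃o ℝ))
    (hnofix : ¬ ∃ x : ℝ, ∀ g ∈ Γ, g x = x)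
    (K : Set ℝ) (hne : K.Nonempty) (hcl : IsClosed K)
    (hdisc : ∀ x ∈ K, ∃ ε > (0:ℝ), ∀ y ∈ K, |y - x| < ε → y = x)
    (hinv : ∀ g ∈ Γ, (fun x : ℝ => g x) '' K = K) :
    ∃ φ : ↥Γ →* Multiplicative ℤ, Function.Surjective φ := by
  obtain ⟨e⟩ := nonempty_orderIso_int_of_isClosed_of_isDiscrete hne hcl
    (isDiscrete_of_forall_abs_sub_lt hdisc) (not_bddAbove_of_forall_image_eq hnofix hne hinv)
    (not_bddBelow_of_forall_image_eq hnofix hne hinv)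
  let ρ := Γ.restrictOrderIsoHom K hinv
  let translation := Int.translationHom.comp e.autCongr.toMonoidHom
  have htranslation : Function.Injective translation :=
    Int.translationHom_injective.comp e.autCongr.injective
  refine (translation.comp ρ).exists_surjective_of_ne_one fun hτ =>
    hnofix ⟨hne.some, fun g hg => ?_⟩
  have hρg : ρ ⟨g, hg⟩ = 1 := htranslation (by simpa using DFunLike.congr_fun hτ ⟨g, hg⟩)
  exact congrArg Subtype.val (DFunLike.congr_fun hρg ⟨_, hne.some_mem⟩)
end
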